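/- arXiv:1907.10137 — 12 statements merged into one kernel-verified Lean document; each statement's English description precedes it below -/
import Mathlib

section
/- Let D be a finite digraph of order n with maximum out-degree Δ⁺(D) ≥ 1. Then L₂(D) ≥ ρ(D) + 1, i.e., the 2-limited packing number of D is at least one more than the packing number of D. -/
open Finset

variable {V : Type*}

/-- The out-degree of `v` in the digraph with arc relation `A`. -/
def outDeg [Fintype V] (A : V → V → Prop) [DecidableRel A] (v : V) : ℕ :=
  (Finset.univ.filter fun u => A v u).card

/-- The in-degree of `v` in the digraph with arc relation `A`. -/
def inDeg [Fintype V] (A : V → V → Prop) [DecidableRel A] (v : V) : ℕ :=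
  (Finset.univ.filter fun u => A u v).card

/-- The minimum in-degree `δ⁻` of the digraph. -/
noncomputable def minInDeg [Fintype V] (A : V → V → Prop) [DecidableRel A] : ℕ :=
  sInf (Set.range fun v => inDeg A v)

/-- The maximum out-degree `Δ⁺` of the digraph. -/
noncomputable def maxOutDeg [Fintype V] (A : V → V → Prop) [DecidableRel A] : ℕ :=
  sSup (Set.range fun v => outDeg A v)

/-- The converse digraph `D⁻¹`, obtained by reversing every arc. -/
def converse (A : V → V → Prop) : V → V → Prop := fun u v => A v u

instance converseDecidable (A : V → V → Prop) [h : DecidableRel A] :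
    DecidableRel (converse A) := fun u v => h v u

/-- `B` is a `k`-limited packing: `|N⁺[v] ∩ B| ≤ k` for every vertex `v`. -/
def IsLimitedPacking [DecidableEq V] (A : V → V → Prop) [DecidableRel A] (k : ℕ)
    (B : Finset V) : Prop :=
  ∀ v : V, (B.filter fun u => u = v ∨ A v u).card ≤ k

/-- The `k`-limited packing number `L_k(D)` (`k = 1` gives the packing number `ρ(D)`). -/
noncomputable def limitedPackingNumber [Fintype V] [DecidableEq V] (A : V → V → Prop) [DecidableRel A]
    (k : ℕ) : ℕ :=
  sSup {m | ∃ B : Finset V, IsLimitedPacking A k B ∧ B.card = m}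

/-- `S` is an `r`-tuple dominating set: every vertex is dominated by at least `r`
vertices of `S` (where `u` dominates `v` if `u = v` or `(u,v)` is an arc). -/
def IsTupleDominating [DecidableEq V] (A : V → V → Prop) [DecidableRel A] (r : ℕ)
    (S : Finset V) : Prop :=
  ∀ v : V, r ≤ (S.filter fun u => u = v ∨ A u v).card

/-- The `r`-tuple domination number `γ×r(D)` (`r = 1` gives the domination number `γ(D)`,
`r = 2` the double domination number `γ×₂(D)`). -/
noncomputable def tupleDominationNumber [Fintype V] [DecidableEq V] (A : V → V → Prop) [DecidableRel A]
    (r : ℕ) : ℕ :=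
  sInf {m | ∃ S : Finset V, IsTupleDominating A r S ∧ S.card = m}

/-- `S` is a total 2-dominating set: the subdigraph induced by `S` has no isolated
vertices, and every vertex outside `S` has at least two in-neighbors in `S`. -/
def IsTotal2Dominating [DecidableEq V] (A : V → V → Prop) [DecidableRel A]
    (S : Finset V) : Prop :=
  (∀ v ∈ S, ∃ u ∈ S, u ≠ v ∧ (A u v ∨ A v u)) ∧
    ∀ v : V, v ∉ S → 2 ≤ (S.filter fun u => A u v).card

/-- The total 2-domination number `γ×₂ᵗ(D)`. -/
noncomputable def total2DominationNumber [Fintype V] [DecidableEq V] (A : V → V → Prop)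
    [DecidableRel A] : ℕ :=
  sInf {m | ∃ S : Finset V, IsTotal2Dominating A S ∧ S.card = m}

/-- `B` is a total 2-limited packing: every vertex of `B` is adjacent with at most one
vertex of `B`, and every vertex outside `B` has at most two out-neighbors in `B`. -/
def IsTotal2LimitedPacking [DecidableEq V] (A : V → V → Prop) [DecidableRel A]
    (B : Finset V) : Prop :=
  (∀ v ∈ B, (B.filter fun u => u ≠ v ∧ (A u v ∨ A v u)).card ≤ 1) ∧
    ∀ v : V, v ∉ B → (B.filter fun u => A v u).card ≤ 2

/-- The total 2-limited packing number `L₂ᵗ(D)`. -/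
noncomputable def total2LimitedPackingNumber [Fintype V] [DecidableEq V] (A : V → V → Prop)
    [DecidableRel A] : ℕ :=
  sSup {m | ∃ B : Finset V, IsTotal2LimitedPacking A B ∧ B.card = m}

/-- An end-vertex: a vertex `v` with `deg⁺(v) + deg⁻(v) = 1`. -/
def IsEndVertex [Fintype V] (A : V → V → Prop) [DecidableRel A] (v : V) : Prop :=
  outDeg A v + inDeg A v = 1

/-- A penultimate vertex: a vertex adjacent with an end-vertex. -/
def IsPenultimate [Fintype V] (A : V → V → Prop) [DecidableRel A] (v : V) : Prop :=
  ∃ u : V, IsEndVertex A u ∧ (A u v ∨ A v u)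

/-!
A maximum packing `B` misses a vertex `w`: an arc `v → u` with `u ≠ v` gives `N⁺[v]` two
vertices, and a packing cannot contain both. Adding `w` to `B` raises every
`|N⁺[x] ∩ B|` by at most one, so `B ∪ {w}` is a 2-limited packing of size `ρ(D) + 1`.
-/

section LimitedPacking

variable [DecidableEq V] {A : V → V → Prop} [DecidableRel A]

theorem isLimitedPacking_empty (k : ℕ) : IsLimitedPacking A k ∅ := by
  intro v
  simp

theorem IsLimitedPacking.insert {k : ℕ} {B : Finset V} (hB : IsLimitedPacking A k B) (w : V) :
    IsLimitedPacking A (k + 1) (insert w B) := by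
  intro v
  rw [filter_insert]
  split_ifs
  · exact (card_insert_le _ _).trans (Nat.succ_le_succ (hB v))
  · exact (hB v).trans k.le_succ

theorem IsLimitedPacking.notMem_or_notMem_of_adj {B : Finset V} (hB : IsLimitedPacking A 1 B)
    {u v : V} (hvu : A v u) (huv : u ≠ v) : u ∉ B ∨ v ∉ B := by
  rw [← not_and_or]
  rintro ⟨hu, hv⟩
  have hsub : ({u, v} : Finset V) ⊆ B.filter fun w => w = v ∨ A v w := by
    simp [insert_subset_iff, hu, hv, hvu]
  have := (card_le_card hsub).trans (hB v)
  rw [card_pair huv] at this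
  omega

variable [Fintype V]

theorem bddAbove_limitedPacking_card (k : ℕ) :
    BddAbove {m | ∃ B : Finset V, IsLimitedPacking A k B ∧ B.card = m} :=
  ⟨Fintype.card V, by rintro m ⟨B, -, rfl⟩; exact B.card_le_univ⟩

theorem IsLimitedPacking.card_le_limitedPackingNumber {k : ℕ} {B : Finset V}
    (hB : IsLimitedPacking A k B) : B.card ≤ limitedPackingNumber A k :=
  le_csSup (bddAbove_limitedPacking_card k) ⟨B, hB, rfl⟩

variable (A) in
theorem exists_isLimitedPacking_card_eq (k : ℕ) :
    ∃ B : Finset V, IsLimitedPacking A k B ∧ B.card = limitedPackingNumber A k :=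
  Nat.sSup_mem (s := {m | ∃ B : Finset V, IsLimitedPacking A k B ∧ B.card = m})
    ⟨0, ∅, isLimitedPacking_empty k, rfl⟩ (bddAbove_limitedPacking_card k)

end LimitedPacking

theorem exists_adj_of_one_le_maxOutDeg [Fintype V] {A : V → V → Prop} [DecidableRel A]
    (hΔ : 1 ≤ maxOutDeg A) : ∃ v u, A v u := by
  obtain ⟨-, ⟨v, rfl⟩, hv⟩ := exists_lt_of_lt_csSup' (Nat.lt_of_succ_le hΔ)
  obtain ⟨u, hu⟩ := card_pos.mp hv
  exact ⟨v, u, (mem_filter.mp hu).2⟩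

theorem stmt0_general {V : Type*} [Fintype V] [DecidableEq V] (A : V → V → Prop) [DecidableRel A]
    (hloopless : ∀ v : V, ¬ A v v)
    (hΔ : 1 ≤ maxOutDeg A) :
    limitedPackingNumber A 1 + 1 ≤ limitedPackingNumber A 2 := by
  obtain ⟨B, hB, hBcard⟩ := exists_isLimitedPacking_card_eq A 1
  obtain ⟨v, u, hvu⟩ := exists_adj_of_one_le_maxOutDeg hΔ
  have huv : u ≠ v := fun h => hloopless v (h ▸ hvu)
  obtain ⟨w, hw⟩ : ∃ w, w ∉ B :=
    (hB.notMem_or_notMem_of_adj hvu huv).elim (fun hu => ⟨u, hu⟩) (fun hv => ⟨v, hv⟩)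
  calc limitedPackingNumber A 1 + 1 = (insert w B).card := by rw [card_insert_of_notMem hw, hBcard]
    _ ≤ limitedPackingNumber A 2 := (hB.insert w).card_le_limitedPackingNumber

/-- If `Δ⁺(D) ≥ 1`, then `L₂(D) ≥ ρ(D) + 1`. -/
theorem stmt0 {V : Type*} [Fintype V] [DecidableEq V] (A : V → V → Prop) [DecidableRel A]
    (hloopless : ∀ v : V, ¬ A v v) (n : ℕ) (hn : Fintype.card V = n)
    (hΔ : 1 ≤ maxOutDeg A) :
    limitedPackingNumber A 1 + 1 ≤ limitedPackingNumber A 2 :=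
  stmt0_general A hloopless hΔ
end

section
/- Let k, r ∈ {1, 2} and let D be a finite digraph with minimum in-degree δ⁻(D) ≥ r − 1. Then r · L_k(D) ≤ k · γ×r(D), where L_k(D) is the k-limited packing number and γ×r(D) is the r-tuple domination number of D. -/
open Finset

variable {V : Type*}

lemma count_aux {V : Type*} [Fintype V] [DecidableEq V] (A : V → V → Prop) [DecidableRel A]
    (k r : ℕ) (B S : Finset V) (hB : IsLimitedPacking A k B) (hS : IsTupleDominating A r S) :
    r * B.card ≤ k * S.card := by
  calc r * B.card = ∑ _b ∈ B, r := by rw [Finset.sum_const, smul_eq_mul, mul_comm]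
    _ ≤ ∑ b ∈ B, (S.filter fun u => u = b ∨ A u b).card := Finset.sum_le_sum fun b _ => hS b
    _ = ∑ b ∈ B, ∑ s ∈ S, if s = b ∨ A s b then 1 else 0 :=
        Finset.sum_congr rfl fun b _ => Finset.card_filter _ _
    _ = ∑ s ∈ S, ∑ b ∈ B, if s = b ∨ A s b then 1 else 0 := Finset.sum_comm
    _ = ∑ s ∈ S, (B.filter fun u => u = s ∨ A s u).card := by
        refine Finset.sum_congr rfl fun s _ => ?_
        rw [Finset.card_filter]
        refine Finset.sum_congr rfl fun b _ => ?_
        by_cases h : s = b <;> by_cases h2 : A s b <;> simp [h, h2, eq_comm]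
    _ ≤ ∑ _s ∈ S, k := Finset.sum_le_sum fun s _ => hB s
    _ = k * S.card := by rw [Finset.sum_const, smul_eq_mul, mul_comm]

/-- For `k, r ∈ {1,2}` and `δ⁻(D) ≥ r − 1`, `r · L_k(D) ≤ k · γ×r(D)`. -/
theorem stmt2 {V : Type*} [Fintype V] [DecidableEq V] (A : V → V → Prop) [DecidableRel A]
    (hloopless : ∀ v : V, ¬ A v v) (k r : ℕ) (hk : k = 1 ∨ k = 2) (hr : r = 1 ∨ r = 2)
    (hδ : r - 1 ≤ minInDeg A) :
    r * limitedPackingNumber A k ≤ k * tupleDominationNumber A r := by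
  -- universal set is an r-tuple dominating set
  have hdom : IsTupleDominating A r Finset.univ := by
    intro v
    have heq : (Finset.univ.filter fun u => u = v ∨ A u v)
        = insert v (Finset.univ.filter fun u => A u v) := by
      ext u; simp
    have hv : v ∉ Finset.univ.filter fun u => A u v := by
      simp [hloopless v]
    have hle : minInDeg A ≤ inDeg A v := Nat.sInf_le ⟨v, rfl⟩
    rw [heq, Finset.card_insert_of_notMem hv]
    have : r - 1 ≤ inDeg A v := le_trans hδ hle
    unfold inDeg at this
    omega
  have hSne : {m | ∃ S : Finset V, IsTupleDominating A r S ∧ S.card = m}.Nonempty :=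
    ⟨Finset.univ.card, Finset.univ, hdom, rfl⟩
  obtain ⟨S, hS, hScard⟩ := Nat.sInf_mem hSne
  have hBne : {m | ∃ B : Finset V, IsLimitedPacking A k B ∧ B.card = m}.Nonempty :=
    ⟨0, ∅, fun v => by simp, rfl⟩
  have hBbdd : BddAbove {m | ∃ B : Finset V, IsLimitedPacking A k B ∧ B.card = m} := by
    refine ⟨Fintype.card V, ?_⟩
    rintro m ⟨B, -, rfl⟩
    exact B.card_le_univ
  obtain ⟨B, hB, hBcard⟩ := Nat.sSup_mem hBne hBbdd
  rw [limitedPackingNumber, ← hBcard, tupleDominationNumber, ← hScard]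
  exact count_aux A k r B S hB hS
end

section
/- Let D be a finite digraph of order n with minimum in-degree δ⁻(D) = δ⁻ ≥ 1, and suppose (δ⁻ + 1) · L₂(D) = 2n. Then for every maximum 2-limited packing B of D: every vertex of B has exactly one out-neighbor in B, every vertex of B has in-degree exactly δ⁻ in D, and every vertex of V(D) ∖ B has exactly two out-neighbors in B. -/
open Finset

variable {V : Type*}

/-- If `δ⁻(D) ≥ 1` and `(δ⁻ + 1) · L₂(D) = 2n`, then every maximum
2-limited packing `B` satisfies: each `v ∈ B` has exactly one out-neighbor in `B` and
in-degree exactly `δ⁻`, and each `v ∉ B` has exactly two out-neighbors in `B`. -/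
theorem stmt4 {V : Type*} [Fintype V] [DecidableEq V] (A : V → V → Prop) [DecidableRel A]
    (hloopless : ∀ v : V, ¬ A v v) (n : ℕ) (hn : Fintype.card V = n)
    (hδ : 1 ≤ minInDeg A)
    (heq : (minInDeg A + 1) * limitedPackingNumber A 2 = 2 * n) :
    ∀ B : Finset V, IsLimitedPacking A 2 B → B.card = limitedPackingNumber A 2 →
      (∀ v ∈ B, (B.filter fun u => A v u).card = 1 ∧ inDeg A v = minInDeg A) ∧
      (∀ v ∉ B, (B.filter fun u => A v u).card = 2) := by
  intro B hB hBcard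
  set δ := minInDeg A with hδdef
  have hsum1 : ∑ v : V, (B.filter fun u => u = v ∨ A v u).card
      = ∑ u ∈ B, (1 + inDeg A u) := by
    have h1 : ∀ v : V, (B.filter fun u => u = v ∨ A v u).card
        = ∑ u ∈ B, if u = v ∨ A v u then 1 else 0 := fun v => Finset.card_filter _ _
    rw [Finset.sum_congr rfl fun v _ => h1 v, Finset.sum_comm]
    refine Finset.sum_congr rfl fun u hu => ?_
    have h2 : ∑ v : V, (if u = v ∨ A v u then 1 else 0)
        = (univ.filter fun v => u = v ∨ A v u).card := (Finset.card_filter _ _).symm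
    rw [h2]
    have h3 : (univ.filter fun v => u = v ∨ A v u)
        = insert u (univ.filter fun v => A v u) := by
      ext v; simp [eq_comm, or_comm]
    rw [h3, Finset.card_insert_of_notMem (by simp [hloopless u]), inDeg]
    omega
  have hub : ∑ v : V, (B.filter fun u => u = v ∨ A v u).card ≤ 2 * n := by
    calc ∑ v : V, (B.filter fun u => u = v ∨ A v u).card ≤ ∑ _v : V, 2 :=
          Finset.sum_le_sum fun v _ => hB v
      _ = 2 * n := by simp [hn, mul_comm]
  have hlow : ∀ u ∈ B, δ + 1 ≤ 1 + inDeg A u := by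
    intro u _
    have : δ ≤ inDeg A u := Nat.sInf_le ⟨u, rfl⟩
    omega
  have hge : ∑ u ∈ B, (δ + 1) ≤ ∑ u ∈ B, (1 + inDeg A u) := Finset.sum_le_sum hlow
  have hconst : ∑ u ∈ B, (δ + 1) = 2 * n := by
    rw [Finset.sum_const, smul_eq_mul, hBcard, mul_comm]
    exact heq
  have hsumeq : ∑ v : V, (B.filter fun u => u = v ∨ A v u).card = 2 * n := by
    omega
  have hterm : ∀ v : V, (B.filter fun u => u = v ∨ A v u).card = 2 := by
    have := (Finset.sum_eq_sum_iff_of_le (fun v (_ : v ∈ (univ : Finset V)) => hB v)).mp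
      (by rw [hsumeq]; simp [hn, mul_comm])
    intro v; exact this v (Finset.mem_univ v)
  have hdeg : ∀ u ∈ B, inDeg A u = δ := by
    have hs : ∑ u ∈ B, (δ + 1) = ∑ u ∈ B, (1 + inDeg A u) := by omega
    have := (Finset.sum_eq_sum_iff_of_le hlow).mp hs
    intro u hu
    have := this u hu
    omega
  constructor
  · intro v hv
    constructor
    · have h3 : (B.filter fun u => u = v ∨ A v u)
          = insert v (B.filter fun u => A v u) := by
        ext u
        simp only [Finset.mem_filter, Finset.mem_insert]
        constructor
        · rintro ⟨hu, h | h⟩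
          · exact Or.inl h
          · exact Or.inr ⟨hu, h⟩
        · rintro (h | ⟨hu, h⟩)
          · exact ⟨h ▸ hv, Or.inl h⟩
          · exact ⟨hu, Or.inr h⟩
      have h4 := hterm v
      rw [h3, Finset.card_insert_of_notMem (by simp [hloopless v])] at h4
      omega
    · exact hdeg v hv
  · intro v hv
    have h3 : (B.filter fun u => u = v ∨ A v u) = B.filter fun u => A v u := by
      refine Finset.filter_congr fun u hu => ?_
      simp only [eq_iff_iff, or_iff_right_iff_imp]
      rintro rfl; exact absurd hu hv
    have h4 := hterm v
    rw [h3] at h4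
    exact h4
end

section
/- Let D be a finite digraph of order n with maximum out-degree Δ⁺(D) = Δ⁺ and minimum in-degree δ⁻(D) ≥ 1. Then γ×₂(D) ≥ 2n/(Δ⁺ + 1), i.e., (Δ⁺ + 1) · γ×₂(D) ≥ 2n. -/
open Finset

variable {V : Type*}

/-
Count the pairs `(u, v)` with `u ∈ S` dominating `v` in two ways. Each of the `n` vertices is
dominated by at least two vertices of a double dominating set `S`, while each `u ∈ S` dominates
only its closed out-neighbourhood, of size at most `Δ⁺ + 1`. Hence `2n ≤ (Δ⁺ + 1)|S|`.
Since `δ⁻ ≥ 1` and `D` is loopless, `V` itself is double dominating, so the infimum defining `γ×₂`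
is attained rather than being the junk value `sInf ∅ = 0`.
-/

section Domination

variable [Fintype V] (A : V → V → Prop) [DecidableRel A]

lemma outDeg_le_maxOutDeg (u : V) : outDeg A u ≤ maxOutDeg A :=
  le_csSup (Set.finite_range _).bddAbove ⟨u, rfl⟩

lemma minInDeg_le_inDeg (v : V) : minInDeg A ≤ inDeg A v :=
  Nat.sInf_le ⟨v, rfl⟩

variable [DecidableEq V]

lemma card_closedOutNbhd_le_maxOutDeg_add_one (u : V) :
    #{v | u = v ∨ A u v} ≤ maxOutDeg A + 1 := by
  calc #{v | u = v ∨ A u v} ≤ #{v | u = v} + #{v | A u v} := by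
        rw [filter_or]; exact card_union_le _ _
    _ = 1 + outDeg A u := by simp [outDeg, filter_eq]
    _ ≤ maxOutDeg A + 1 := by have := outDeg_le_maxOutDeg A u; omega

lemma sum_card_dominators_eq (S : Finset V) :
    ∑ v, #{u ∈ S | u = v ∨ A u v} = ∑ u ∈ S, #{v | u = v ∨ A u v} := by
  simp only [card_filter]
  exact sum_comm

lemma IsTupleDominating.mul_card_le {r : ℕ} {S : Finset V} (hS : IsTupleDominating A r S) :
    r * Fintype.card V ≤ (maxOutDeg A + 1) * #S :=
  calc r * Fintype.card V = ∑ _v : V, r := by simp [mul_comm]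
    _ ≤ ∑ v, #{u ∈ S | u = v ∨ A u v} := sum_le_sum fun v _ => hS v
    _ = ∑ u ∈ S, #{v | u = v ∨ A u v} := sum_card_dominators_eq A S
    _ ≤ ∑ _u ∈ S, (maxOutDeg A + 1) :=
        sum_le_sum fun u _ => card_closedOutNbhd_le_maxOutDeg_add_one A u
    _ = (maxOutDeg A + 1) * #S := by simp [mul_comm]

lemma exists_isTupleDominating_card_eq {r : ℕ} {S : Finset V} (hS : IsTupleDominating A r S) :
    ∃ T : Finset V, IsTupleDominating A r T ∧ #T = tupleDominationNumber A r :=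
  Nat.sInf_mem (s := {m | ∃ T : Finset V, IsTupleDominating A r T ∧ #T = m}) ⟨_, S, hS, rfl⟩

lemma isTupleDominating_two_univ (hloopless : ∀ v : V, ¬ A v v) (hδ : 1 ≤ minInDeg A) :
    IsTupleDominating A 2 univ := by
  intro v
  obtain ⟨u, hu⟩ : ∃ u, A u v := by
    have : 0 < inDeg A v := hδ.trans (minInDeg_le_inDeg A v)
    simpa [inDeg, card_pos, filter_nonempty_iff] using this
  have huv : u ≠ v := by rintro rfl; exact hloopless u hu
  calc 2 = #{u, v} := (card_pair huv).symm
    _ ≤ #{w | w = v ∨ A w v} := card_le_card (by simp [insert_subset_iff, hu])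

end Domination

/-- If `δ⁻(D) ≥ 1`, then `(Δ⁺ + 1) · γ×₂(D) ≥ 2n`. -/
theorem stmt5 {V : Type*} [Fintype V] [DecidableEq V] (A : V → V → Prop) [DecidableRel A]
    (hloopless : ∀ v : V, ¬ A v v) (n : ℕ) (hn : Fintype.card V = n)
    (hδ : 1 ≤ minInDeg A) :
    2 * n ≤ (maxOutDeg A + 1) * tupleDominationNumber A 2 := by
  obtain ⟨S, hS, hcard⟩ :=
    exists_isTupleDominating_card_eq A (isTupleDominating_two_univ A hloopless hδ)
  rw [← hn, ← hcard]
  exact hS.mul_card_le A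
end

section
/- For any directed tree T of order n ≥ 2, L₂ᵗ(T) ≤ γ×₂ᵗ(T), i.e., the total 2-limited packing number of T is at most the total 2-domination number of T. -/
open Finset

variable {V : Type*}

/- ### Auxiliary lemmas for stmt7 ### -/

lemma exists_depth {V : Type*} (G : SimpleGraph V) (hG : G.IsTree) :
    ∃ d : V → ℕ, (∀ u v, G.Adj u v → d u = d v + 1 ∨ d v = d u + 1) ∧
      (∀ u v v', G.Adj u v → G.Adj u v' → d v + 1 = d u → d v' + 1 = d u → v = v') := by
  classical
  obtain ⟨r⟩ := hG.isConnected.nonempty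
  set pth : ∀ v : V, G.Path v r := fun v => ((hG.isConnected.preconnected v r).some).toPath
    with hpth
  have key : ∀ (v : V) (q : G.Path v r), q = pth v := fun v q => hG.2.path_unique q (pth v)
  set d : V → ℕ := fun v => (pth v).1.length with hd
  have claimA : ∀ (u v : V) (h : G.Adj u v),
      (pth u).1 = SimpleGraph.Walk.cons h (pth v).1 ∨ d v = d u + 1 := by
    intro u v h
    by_cases hu : u ∈ (pth v).1.support
    · right
      have ht : ((pth v).1.takeUntil u hu).IsPath := (pth v).2.takeUntil hu
      have hdp : ((pth v).1.dropUntil u hu).IsPath := (pth v).2.dropUntil hu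
      have h1 : (⟨(pth v).1.takeUntil u hu, ht⟩ : G.Path v u) = SimpleGraph.Path.singleton h.symm :=
        hG.2.path_unique _ _
      have h1' : ((pth v).1.takeUntil u hu).length = 1 := by
        have := congrArg (fun p : G.Path v u => p.1.length) h1
        simpa [SimpleGraph.Path.singleton] using this
      have h2 : (⟨(pth v).1.dropUntil u hu, hdp⟩ : G.Path u r) = pth u := key u _
      have h2' : ((pth v).1.dropUntil u hu).length = d u :=
        congrArg (fun p : G.Path u r => p.1.length) h2
      have h3 := congrArg SimpleGraph.Walk.length ((pth v).1.take_spec hu)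
      rw [SimpleGraph.Walk.length_append, h1', h2'] at h3
      have hdd : d v = ((pth v).1).length := rfl
      omega
    · left
      have hp : (SimpleGraph.Walk.cons h (pth v).1).IsPath := (pth v).2.cons hu
      have := key u ⟨SimpleGraph.Walk.cons h (pth v).1, hp⟩
      exact (congrArg (fun p : G.Path u r => p.1) this).symm
  refine ⟨d, ?_, ?_⟩
  · intro u v h
    rcases claimA u v h with hc | hc
    · left; simp only [hd]; rw [hc]; simp [SimpleGraph.Walk.length_cons]
    · right; exact hc
  · intro u v v' h h' hv hv'
    rcases claimA u v h with hc | hc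
    · rcases claimA u v' h' with hc' | hc'
      · have := hc.symm.trans hc'
        have h2 := congrArg SimpleGraph.Walk.support this
        rw [SimpleGraph.Walk.support_cons, SimpleGraph.Walk.support_cons] at h2
        have h3 : (pth v).1.support = (pth v').1.support := by
          simpa using h2
        have hv1 := SimpleGraph.Walk.support_eq_cons (pth v).1
        have hv2 := SimpleGraph.Walk.support_eq_cons (pth v').1
        rw [hv1, hv2] at h3
        exact (List.cons.injEq _ _ _ _ ▸ h3).1
      · omega
    · omega

lemma pair_upper {V : Type*} [Fintype V] [DecidableEq V] (G : SimpleGraph V) [DecidableRel G.Adj]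
    (d : V → ℕ) (P1 : ∀ u v, G.Adj u v → d u = d v + 1 ∨ d v = d u + 1)
    (P2 : ∀ u v v', G.Adj u v → G.Adj u v' → d v + 1 = d u → d v' + 1 = d u → v = v')
    (W : Finset V) (hW : W.Nonempty) :
    ((W ×ˢ W).filter fun z : V × V => G.Adj z.1 z.2).card + 2 ≤ 2 * W.card := by
  classical
  obtain ⟨w₀, hw₀W, hw₀min⟩ := W.exists_min_image d hW
  set U := (W ×ˢ W).filter (fun z => G.Adj z.1 z.2 ∧ d z.1 = d z.2 + 1) with hU
  set D := (W ×ˢ W).filter (fun z => G.Adj z.1 z.2 ∧ d z.2 = d z.1 + 1) with hD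
  have hsub : ((W ×ˢ W).filter fun z => G.Adj z.1 z.2) ⊆ U ∪ D := by
    intro z hz
    rw [mem_filter] at hz
    rcases P1 z.1 z.2 hz.2 with h | h
    · exact mem_union_left _ (by rw [hU, mem_filter]; exact ⟨hz.1, hz.2, h⟩)
    · exact mem_union_right _ (by rw [hD, mem_filter]; exact ⟨hz.1, hz.2, h⟩)
  have hDU : D.card = U.card := by
    apply Finset.card_bij (fun z _ => Prod.swap z)
    · intro z hz
      rw [hD, mem_filter, mem_product] at hz
      rw [hU, mem_filter, mem_product]
      exact ⟨⟨hz.1.2, hz.1.1⟩, hz.2.1.symm, hz.2.2⟩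
    · intro a _ b _ h
      exact Prod.swap_injective h
    · intro z hz
      rw [hU, mem_filter, mem_product] at hz
      refine ⟨Prod.swap z, ?_, ?_⟩
      · rw [hD, mem_filter, mem_product]
        exact ⟨⟨hz.1.2, hz.1.1⟩, hz.2.1.symm, hz.2.2⟩
      · simp
  have hUcard : U.card ≤ W.card - 1 := by
    have hinj : ∀ z ∈ U, z.1 ∈ W.erase w₀ := by
      intro z hz
      rw [hU, mem_filter, mem_product] at hz
      rw [mem_erase]
      refine ⟨?_, hz.1.1⟩
      intro hzw
      have := hw₀min z.2 hz.1.2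
      rw [← hzw] at this
      omega
    have hinj2 : Set.InjOn Prod.fst (U : Set (V × V)) := by
      intro z hz z' hz' hfst
      rw [Finset.mem_coe, hU, mem_filter] at hz hz'
      have ha' : G.Adj z.1 z'.2 := by rw [hfst]; exact hz'.2.1
      have e1 : d z.1 = d z.2 + 1 := hz.2.2
      have e2 : d z.1 = d z'.2 + 1 := by rw [hfst]; exact hz'.2.2
      have := P2 z.1 z.2 z'.2 hz.2.1 ha' (by omega) (by omega)
      exact Prod.ext hfst this
    have := Finset.card_le_card_of_injOn Prod.fst hinj hinj2
    rwa [Finset.card_erase_of_mem hw₀W] at this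
  have h1le : 1 ≤ W.card := Finset.card_pos.mpr hW
  have := Finset.card_le_card hsub
  have h2 := Finset.card_union_le U D
  omega

def reachQ {V : Type*} (G : SimpleGraph V) (S Q : Finset V) : ℕ → V → Prop
  | 0, v => v ∈ Q
  | (k+1), v => v ∈ Q ∨ (v ∈ S ∧ ∃ w ∈ S, G.Adj v w ∧ reachQ G S Q k w)

lemma key_ineq {V : Type*} [Fintype V] [DecidableEq V] (A : V → V → Prop) [DecidableRel A]
    (htree : (SimpleGraph.fromRel A).IsTree) (B S : Finset V)
    (hB : IsTotal2LimitedPacking A B) (hS : IsTotal2Dominating A S) :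
    B.card ≤ S.card := by
  classical
  set G := SimpleGraph.fromRel A with hGdef
  by_cases hPe : B \ S = ∅
  · exact Finset.card_le_card (sdiff_eq_empty_iff_subset.mp hPe)
  set Q := S \ B with hQdef
  set P := B \ S with hPdef
  have hPne : P.Nonempty := nonempty_iff_ne_empty.mpr hPe
  set M := S.filter (fun v => ∃ k, reachQ G S Q k v) with hMdef
  have hMS : M ⊆ S := filter_subset _ _
  have hQM : Q ⊆ M := by
    intro q hq
    rw [hMdef, mem_filter]
    refine ⟨(mem_sdiff.mp hq).1, 0, ?_⟩
    simpa only [reachQ] using hq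
  -- every S-in-neighbor of a vertex of P lies in M
  have hP2 : ∀ p ∈ P, 2 ≤ (M.filter fun x => A x p).card := by
    intro p hp
    rw [hPdef, mem_sdiff] at hp
    refine le_trans (hS.2 p hp.2) (Finset.card_le_card ?_)
    intro x hx
    rw [mem_filter] at hx ⊢
    refine ⟨?_, hx.2⟩
    by_cases hxB : x ∈ B
    · obtain ⟨y, hyS, hyne, hyadj⟩ := hS.1 x hx.1
      have hyB : y ∉ B := by
        intro hyB
        have hcard := hB.1 x hxB
        have hpy : p ≠ y := fun h => hp.2 (h ▸ hyS)
        have hsub2 : ({p, y} : Finset V) ⊆ B.filter (fun u => u ≠ x ∧ (A u x ∨ A x u)) := by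
          intro t ht
          rw [mem_insert, mem_singleton] at ht
          rcases ht with rfl | rfl
          · rw [mem_filter]
            exact ⟨hp.1, fun h => hp.2 (h ▸ hx.1), Or.inr hx.2⟩
          · rw [mem_filter]
            exact ⟨hyB, hyne, hyadj⟩
        have h2 := Finset.card_le_card hsub2
        rw [Finset.card_pair hpy] at h2
        omega
      rw [hMdef, mem_filter]
      refine ⟨hx.1, 1, ?_⟩
      simp only [reachQ]
      refine Or.inr ⟨hx.1, y, hyS, ?_, ?_⟩
      · rw [hGdef, SimpleGraph.fromRel_adj]
        exact ⟨hyne.symm, hyadj.symm⟩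
      · rw [hQdef, mem_sdiff]
        exact ⟨hyS, hyB⟩
    · exact hQM (by rw [hQdef, mem_sdiff]; exact ⟨hx.1, hxB⟩)
  -- distance to Q within S, and descent function g
  set dQ : V → ℕ := fun v => if h : ∃ k, reachQ G S Q k v then Nat.find h else 0 with hdQdef
  set g : V → V :=
    fun m => if h : ∃ w, w ∈ M ∧ G.Adj m w ∧ dQ w < dQ m then Classical.choose h else m
    with hgdef
  have hgspec : ∀ m ∈ M, m ∉ Q → g m ∈ M ∧ G.Adj m (g m) ∧ dQ (g m) < dQ m := by
    intro m hm hmQ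
    have hex : ∃ k, reachQ G S Q k m := (mem_filter.mp hm).2
    have hfind := Nat.find_spec hex
    have hdm : dQ m = Nat.find hex := by
      rw [hdQdef]; exact dif_pos hex
    rcases hk : Nat.find hex with _ | j
    · rw [hk] at hfind
      simp only [reachQ] at hfind
      exact absurd hfind hmQ
    · rw [hk] at hfind
      simp only [reachQ] at hfind
      rcases hfind with h | ⟨hmS, w, hwS, hadj, hrw⟩
      · exact absurd h hmQ
      · have hexw : ∃ k, reachQ G S Q k w := ⟨j, hrw⟩
        have hwM : w ∈ M := by rw [hMdef, mem_filter]; exact ⟨hwS, hexw⟩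
        have hdw : dQ w ≤ j := by
          simp only [hdQdef]
          rw [dif_pos hexw]
          exact Nat.find_le hrw
        have hexg : ∃ w', w' ∈ M ∧ G.Adj m w' ∧ dQ w' < dQ m :=
          ⟨w, hwM, hadj, by omega⟩
        have hspec := Classical.choose_spec hexg
        simp only [hgdef]
        rw [dif_pos hexg]
        exact hspec
  -- two distinct M-in-neighbors for each p ∈ P
  set pr : V → V × V := fun p =>
    if h : ∃ z : V × V, (z.1 ∈ M ∧ A z.1 p) ∧ (z.2 ∈ M ∧ A z.2 p) ∧ z.1 ≠ z.2 then
      Classical.choose h else (p, p)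
    with hprdef
  have hprspec : ∀ p ∈ P,
      ((pr p).1 ∈ M ∧ A (pr p).1 p) ∧ ((pr p).2 ∈ M ∧ A (pr p).2 p) ∧ (pr p).1 ≠ (pr p).2 := by
    intro p hp
    have h2 := hP2 p hp
    have h1 : 1 < (M.filter fun x => A x p).card := by omega
    obtain ⟨a, ha, b, hb, hab⟩ := Finset.one_lt_card.mp h1
    rw [mem_filter] at ha hb
    have hex : ∃ z : V × V, (z.1 ∈ M ∧ A z.1 p) ∧ (z.2 ∈ M ∧ A z.2 p) ∧ z.1 ≠ z.2 :=
      ⟨(a, b), ⟨ha.1, ha.2⟩, ⟨hb.1, hb.2⟩, hab⟩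
    have hspec := Classical.choose_spec hex
    simp only [hprdef]
    rw [dif_pos hex]
    exact hspec
  have hMPadj : ∀ p ∈ P, ∀ x ∈ M, A x p → G.Adj x p := by
    intro p hp x hx hA
    rw [hGdef, SimpleGraph.fromRel_adj]
    have hxS := hMS hx
    have hpS := (mem_sdiff.mp hp).2
    exact ⟨fun h => hpS (h ▸ hxS), Or.inl hA⟩
  -- counting sets
  set TM := ((M ×ˢ M).filter fun z : V × V => G.Adj z.1 z.2) with hTM
  set TMP := ((M ×ˢ P).filter fun z : V × V => G.Adj z.1 z.2) with hTMP
  set TPM := ((P ×ˢ M).filter fun z : V × V => G.Adj z.1 z.2) with hTPM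
  set W := M ∪ P with hW
  set TW := ((W ×ˢ W).filter fun z : V × V => G.Adj z.1 z.2) with hTW
  have hMP : Disjoint M P := by
    rw [Finset.disjoint_left]
    intro x hxM hxP
    exact (mem_sdiff.mp hxP).2 (hMS hxM)
  -- lower bound within M
  have hTMcard : 2 * (M \ Q).card ≤ TM.card := by
    set T1 := (M \ Q).image (fun m => (m, g m)) with hT1
    set T2 := (M \ Q).image (fun m => (g m, m)) with hT2
    have spec : ∀ m ∈ M \ Q, g m ∈ M ∧ G.Adj m (g m) ∧ dQ (g m) < dQ m := by
      intro m hm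
      rw [mem_sdiff] at hm
      exact hgspec m hm.1 hm.2
    have hT1sub : T1 ⊆ TM := by
      intro z hz
      obtain ⟨m, hm, rfl⟩ := mem_image.mp hz
      obtain ⟨h1, h2, _⟩ := spec m hm
      rw [hTM, mem_filter, mem_product]
      exact ⟨⟨(mem_sdiff.mp hm).1, h1⟩, h2⟩
    have hT2sub : T2 ⊆ TM := by
      intro z hz
      obtain ⟨m, hm, rfl⟩ := mem_image.mp hz
      obtain ⟨h1, h2, _⟩ := spec m hm
      rw [hTM, mem_filter, mem_product]
      exact ⟨⟨h1, (mem_sdiff.mp hm).1⟩, h2.symm⟩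
    have hc1 : T1.card = (M \ Q).card :=
      Finset.card_image_of_injOn (fun a _ b _ h => congrArg Prod.fst h)
    have hc2 : T2.card = (M \ Q).card :=
      Finset.card_image_of_injOn (fun a _ b _ h => congrArg Prod.snd h)
    have hdisj : Disjoint T1 T2 := by
      rw [Finset.disjoint_left]
      intro z hz1 hz2
      obtain ⟨m, hm, rfl⟩ := mem_image.mp hz1
      obtain ⟨m', hm', heq⟩ := mem_image.mp hz2
      have e1 : g m' = m := congrArg Prod.fst heq
      have e2 : m' = g m := congrArg Prod.snd heq
      have s1 := (spec m hm).2.2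
      have s2 := (spec m' hm').2.2
      rw [e1] at s2
      rw [← e2] at s1
      omega
    have := Finset.card_le_card (Finset.union_subset hT1sub hT2sub)
    rw [Finset.card_union_of_disjoint hdisj, hc1, hc2] at this
    omega
  -- lower bounds for cross pairs
  have hTMPcard : 2 * P.card ≤ TMP.card := by
    set T3 := P.image (fun p => ((pr p).1, p)) with hT3
    set T4 := P.image (fun p => ((pr p).2, p)) with hT4
    have hT3sub : T3 ⊆ TMP := by
      intro z hz
      obtain ⟨p, hp, rfl⟩ := mem_image.mp hz
      obtain ⟨⟨h1, h2⟩, _, _⟩ := hprspec p hp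
      rw [hTMP, mem_filter, mem_product]
      exact ⟨⟨h1, hp⟩, hMPadj p hp _ h1 h2⟩
    have hT4sub : T4 ⊆ TMP := by
      intro z hz
      obtain ⟨p, hp, rfl⟩ := mem_image.mp hz
      obtain ⟨_, ⟨h1, h2⟩, _⟩ := hprspec p hp
      rw [hTMP, mem_filter, mem_product]
      exact ⟨⟨h1, hp⟩, hMPadj p hp _ h1 h2⟩
    have hc3 : T3.card = P.card :=
      Finset.card_image_of_injOn (fun a _ b _ h => congrArg Prod.snd h)
    have hc4 : T4.card = P.card :=
      Finset.card_image_of_injOn (fun a _ b _ h => congrArg Prod.snd h)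
    have hdisj : Disjoint T3 T4 := by
      rw [Finset.disjoint_left]
      intro z hz1 hz2
      obtain ⟨p, hp, rfl⟩ := mem_image.mp hz1
      obtain ⟨p', hp', heq⟩ := mem_image.mp hz2
      have e2 : p' = p := congrArg Prod.snd heq
      subst e2
      have e1 : (pr p').2 = (pr p').1 := congrArg Prod.fst heq
      exact (hprspec p' hp').2.2 e1.symm
    have := Finset.card_le_card (Finset.union_subset hT3sub hT4sub)
    rw [Finset.card_union_of_disjoint hdisj, hc3, hc4] at this
    omega
  have hTPMcard : 2 * P.card ≤ TPM.card := by
    set T5 := P.image (fun p => (p, (pr p).1)) with hT5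
    set T6 := P.image (fun p => (p, (pr p).2)) with hT6
    have hT5sub : T5 ⊆ TPM := by
      intro z hz
      obtain ⟨p, hp, rfl⟩ := mem_image.mp hz
      obtain ⟨⟨h1, h2⟩, _, _⟩ := hprspec p hp
      rw [hTPM, mem_filter, mem_product]
      exact ⟨⟨hp, h1⟩, (hMPadj p hp _ h1 h2).symm⟩
    have hT6sub : T6 ⊆ TPM := by
      intro z hz
      obtain ⟨p, hp, rfl⟩ := mem_image.mp hz
      obtain ⟨_, ⟨h1, h2⟩, _⟩ := hprspec p hp
      rw [hTPM, mem_filter, mem_product]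
      exact ⟨⟨hp, h1⟩, (hMPadj p hp _ h1 h2).symm⟩
    have hc5 : T5.card = P.card :=
      Finset.card_image_of_injOn (fun a _ b _ h => congrArg Prod.fst h)
    have hc6 : T6.card = P.card :=
      Finset.card_image_of_injOn (fun a _ b _ h => congrArg Prod.fst h)
    have hdisj : Disjoint T5 T6 := by
      rw [Finset.disjoint_left]
      intro z hz1 hz2
      obtain ⟨p, hp, rfl⟩ := mem_image.mp hz1
      obtain ⟨p', hp', heq⟩ := mem_image.mp hz2
      have e2 : p' = p := congrArg Prod.fst heq
      subst e2
      have e1 : (pr p').2 = (pr p').1 := congrArg Prod.snd heq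
      exact (hprspec p' hp').2.2 e1.symm
    have := Finset.card_le_card (Finset.union_subset hT5sub hT6sub)
    rw [Finset.card_union_of_disjoint hdisj, hc5, hc6] at this
    omega
  -- the three families are disjoint and inside TW
  have hTMsub : TM ⊆ TW := by
    intro z hz
    rw [hTM, mem_filter, mem_product] at hz
    rw [hTW, mem_filter, mem_product, hW]
    exact ⟨⟨mem_union_left _ hz.1.1, mem_union_left _ hz.1.2⟩, hz.2⟩
  have hTMPsub : TMP ⊆ TW := by
    intro z hz
    rw [hTMP, mem_filter, mem_product] at hz
    rw [hTW, mem_filter, mem_product, hW]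
    exact ⟨⟨mem_union_left _ hz.1.1, mem_union_right _ hz.1.2⟩, hz.2⟩
  have hTPMsub : TPM ⊆ TW := by
    intro z hz
    rw [hTPM, mem_filter, mem_product] at hz
    rw [hTW, mem_filter, mem_product, hW]
    exact ⟨⟨mem_union_right _ hz.1.1, mem_union_left _ hz.1.2⟩, hz.2⟩
  have hd1 : Disjoint TM TMP := by
    rw [Finset.disjoint_left]
    intro z hz1 hz2
    rw [hTM, mem_filter, mem_product] at hz1
    rw [hTMP, mem_filter, mem_product] at hz2
    exact Finset.disjoint_left.mp hMP hz1.1.2 hz2.1.2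
  have hd2 : Disjoint (TM ∪ TMP) TPM := by
    rw [Finset.disjoint_left]
    intro z hz1 hz2
    rw [hTPM, mem_filter, mem_product] at hz2
    rcases Finset.mem_union.mp hz1 with h | h
    · rw [hTM, mem_filter, mem_product] at h
      exact Finset.disjoint_left.mp hMP h.1.1 hz2.1.1
    · rw [hTMP, mem_filter, mem_product] at h
      exact Finset.disjoint_left.mp hMP h.1.1 hz2.1.1
  have hTWlower : TM.card + TMP.card + TPM.card ≤ TW.card := by
    have hsub : TM ∪ TMP ∪ TPM ⊆ TW :=
      Finset.union_subset (Finset.union_subset hTMsub hTMPsub) hTPMsub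
    have := Finset.card_le_card hsub
    rw [Finset.card_union_of_disjoint hd2, Finset.card_union_of_disjoint hd1] at this
    exact this
  -- upper bound from the tree structure
  obtain ⟨d, P1, P2⟩ := exists_depth G htree
  have hWne : W.Nonempty := by
    obtain ⟨p, hp⟩ := hPne
    exact ⟨p, mem_union_right _ hp⟩
  have hup : TW.card + 2 ≤ 2 * W.card := pair_upper G d P1 P2 W hWne
  have hWcard : W.card = M.card + P.card := by
    rw [hW, Finset.card_union_of_disjoint hMP]
  have hMcard : (M \ Q).card + Q.card = M.card := Finset.card_sdiff_add_card_eq_card hQM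
  have hPltQ : P.card + 1 ≤ Q.card := by omega
  have hBcard : (B ∩ S).card + P.card = B.card := by
    rw [hPdef]; exact Finset.card_inter_add_card_sdiff B S
  have hScard : (S ∩ B).card + Q.card = S.card := by
    rw [hQdef]; exact Finset.card_inter_add_card_sdiff S B
  have hBS : (B ∩ S).card = (S ∩ B).card := by rw [Finset.inter_comm]
  omega

/-- For any directed tree `T` of order `n ≥ 2`, `L₂ᵗ(T) ≤ γ×₂ᵗ(T)`. -/
theorem stmt7 {V : Type*} [Fintype V] [DecidableEq V] (A : V → V → Prop) [DecidableRel A]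
    (hloopless : ∀ v : V, ¬ A v v) (htree : (SimpleGraph.fromRel A).IsTree)
    (n : ℕ) (hn : Fintype.card V = n) (h2 : 2 ≤ n) :
    total2LimitedPackingNumber A ≤ total2DominationNumber A := by
  classical
  have hVcard : 1 < Fintype.card V := by omega
  have huniv : IsTotal2Dominating A (univ : Finset V) := by
    constructor
    · intro v _
      obtain ⟨w, hw⟩ := Fintype.exists_ne_of_one_lt_card hVcard v
      obtain ⟨pw⟩ := htree.isConnected.preconnected v w
      cases pw with
      | nil => exact absurd rfl hw
      | cons h p =>
        rw [SimpleGraph.fromRel_adj] at h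
        exact ⟨_, mem_univ _, Ne.symm h.1, h.2.symm⟩
    · intro v hv
      exact absurd (mem_univ v) hv
  have hdomne : {m | ∃ S : Finset V, IsTotal2Dominating A S ∧ S.card = m}.Nonempty :=
    ⟨(univ : Finset V).card, univ, huniv, rfl⟩
  have hpackempty : IsTotal2LimitedPacking A (∅ : Finset V) := by
    constructor
    · intro v hv
      exact absurd hv (notMem_empty v)
    · intro v _
      simp
  show sSup {m | ∃ B : Finset V, IsTotal2LimitedPacking A B ∧ B.card = m} ≤
    sInf {m | ∃ S : Finset V, IsTotal2Dominating A S ∧ S.card = m}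
  apply le_csInf hdomne
  rintro m ⟨S, hS, rfl⟩
  have hpackne : {m | ∃ B : Finset V, IsTotal2LimitedPacking A B ∧ B.card = m}.Nonempty :=
    ⟨0, ∅, hpackempty, rfl⟩
  apply csSup_le hpackne
  rintro k ⟨B, hBp, rfl⟩
  exact key_ineq A htree B S hBp hS
end

section
/- Let T be a directed tree of order n ≥ 2 with e end-vertices and p penultimate vertices. Then γ×₂ᵗ(T) ≥ (2n + e − p + 2)/3, i.e., 3 · γ×₂ᵗ(T) ≥ 2n + e − p + 2. -/
open Finset

variable {V : Type*}

/-- For a directed tree `T` of order `n` with `e` end-vertices and `p`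
penultimate vertices, `3 · γ×₂ᵗ(T) ≥ 2n + e − p + 2`. -/
theorem stmt8 {V : Type*} [Fintype V] [DecidableEq V] (A : V → V → Prop) [DecidableRel A]
    (hloopless : ∀ v : V, ¬ A v v) (htree : (SimpleGraph.fromRel A).IsTree)
    (n e p : ℕ) (hn : Fintype.card V = n) (h2 : 2 ≤ n)
    (he : e = Nat.card {v : V // IsEndVertex A v})
    (hp : p = Nat.card {v : V // IsPenultimate A v}) :
    2 * n + e + 2 ≤ 3 * total2DominationNumber A + p := by
  classical
  set G := SimpleGraph.fromRel A with hGdef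
  haveI hdec : DecidableRel G.Adj :=
    Classical.decRel _
  have hsymm : ∀ u v : V, (u ≠ v ∧ (A u v ∨ A v u)) ↔ (v ≠ u ∧ (A v u ∨ A u v)) := by
    intro u v
    constructor <;> rintro ⟨h1, h2⟩ <;> exact ⟨h1.symm, h2.symm⟩
  -- every vertex has a neighbor
  have hnbr : ∀ v : V, ∃ u : V, u ≠ v ∧ (A u v ∨ A v u) := by
    intro v
    have h1 : 1 < Fintype.card V := by omega
    obtain ⟨u, hu⟩ := Fintype.exists_ne_of_one_lt_card h1 v
    obtain ⟨w⟩ := htree.isConnected.preconnected v u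
    cases w with
    | nil => exact absurd rfl hu
    | cons h q =>
        obtain ⟨h1, h2⟩ := h
        exact ⟨_, h1.symm, h2.symm⟩
  -- an end vertex has at most one neighbor
  have hEndSub : ∀ v : V, IsEndVertex A v →
      (univ.filter fun u => u ≠ v ∧ (A u v ∨ A v u)).card ≤ 1 := by
    intro v hv
    have hsub : (univ.filter fun u => u ≠ v ∧ (A u v ∨ A v u)) ⊆
        (univ.filter fun u => A v u) ∪ (univ.filter fun u => A u v) := by
      intro u hu
      simp only [Finset.mem_filter, Finset.mem_union, Finset.mem_univ, true_and] at *
      tauto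
    calc (univ.filter fun u => u ≠ v ∧ (A u v ∨ A v u)).card
        ≤ ((univ.filter fun u => A v u) ∪ (univ.filter fun u => A u v)).card :=
          Finset.card_le_card hsub
      _ ≤ (univ.filter fun u => A v u).card + (univ.filter fun u => A u v).card :=
          Finset.card_union_le _ _
      _ = 1 := hv
  -- an end vertex has a neighbor which is a penultimate vertex
  have hEndNbr : ∀ v : V, IsEndVertex A v →
      ∃ w, (w ≠ v ∧ (A w v ∨ A v w)) ∧ IsPenultimate A w := by
    intro v hv
    have hv' : outDeg A v + inDeg A v = 1 := hv
    have hcases : 0 < outDeg A v ∨ 0 < inDeg A v := by omega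
    rcases hcases with h | h
    · obtain ⟨w, hw⟩ := Finset.card_pos.mp h
      simp only [outDeg, Finset.mem_filter, Finset.mem_univ, true_and] at hw
      exact ⟨w, ⟨fun hwv => hloopless v (hwv ▸ hw), Or.inr hw⟩, ⟨v, hv, Or.inl hw⟩⟩
    · obtain ⟨w, hw⟩ := Finset.card_pos.mp h
      simp only [inDeg, Finset.mem_filter, Finset.mem_univ, true_and] at hw
      exact ⟨w, ⟨fun hwv => hloopless v (hwv ▸ hw), Or.inl hw⟩, ⟨v, hv, Or.inr hw⟩⟩
  -- univ is total 2-dominating, so a minimum set exists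
  have huniv : IsTotal2Dominating A (univ : Finset V) := by
    constructor
    · intro v _
      obtain ⟨u, h1, h2⟩ := hnbr v
      exact ⟨u, Finset.mem_univ u, h1, h2⟩
    · intro v hv
      exact absurd (Finset.mem_univ v) hv
  have hne : {m | ∃ S : Finset V, IsTotal2Dominating A S ∧ S.card = m}.Nonempty :=
    ⟨_, (univ : Finset V), huniv, rfl⟩
  obtain ⟨S, hS, hScard⟩ := Nat.sInf_mem hne
  have hScard' : S.card = total2DominationNumber A := hScard
  -- end vertices lie in S
  have hEndS : ∀ v : V, IsEndVertex A v → v ∈ S := by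
    intro v hv
    by_contra hvS
    have h2' := hS.2 v hvS
    have hsub : (S.filter fun u => A u v) ⊆
        univ.filter fun u => u ≠ v ∧ (A u v ∨ A v u) := by
      intro u hu
      simp only [Finset.mem_filter, Finset.mem_univ, true_and] at *
      exact ⟨fun h => hloopless v (h ▸ hu.2), Or.inl hu.2⟩
    have h3 := hEndSub v hv
    have h4 := Finset.card_le_card hsub
    omega
  -- penultimate vertices lie in S
  have hPenS : ∀ w : V, IsPenultimate A w → w ∈ S := by
    intro w hw
    obtain ⟨u, hu, huw⟩ := hw
    have huS : u ∈ S := hEndS u hu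
    obtain ⟨x, hxS, hxu, hxadj⟩ := hS.1 u huS
    have hmemx : x ∈ univ.filter (fun z => z ≠ u ∧ (A z u ∨ A u z)) := by
      simp only [Finset.mem_filter, Finset.mem_univ, true_and]
      exact ⟨hxu, hxadj⟩
    have hwu : w ≠ u := by
      intro h
      subst h
      rcases huw with h' | h' <;> exact hloopless w h'
    have hmemw : w ∈ univ.filter (fun z => z ≠ u ∧ (A z u ∨ A u z)) := by
      simp only [Finset.mem_filter, Finset.mem_univ, true_and]
      exact ⟨hwu, huw.symm⟩
    have hxw : x = w := Finset.card_le_one.mp (hEndSub u hu) x hmemx w hmemw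
    exact hxw ▸ hxS
  -- neighbor counts
  let dS : V → ℕ := fun v => (S.filter fun u => u ≠ v ∧ (A u v ∨ A v u)).card
  let dC : V → ℕ := fun v => ((univ \ S).filter fun u => u ≠ v ∧ (A u v ∨ A v u)).card
  have hdeg : ∀ v : V, G.degree v = dS v + dC v := by
    intro v
    have h1 : G.degree v = (univ.filter fun u => u ≠ v ∧ (A u v ∨ A v u)).card := by
      rw [SimpleGraph.degree, SimpleGraph.neighborFinset_eq_filter]
      congr 1
      apply Finset.filter_congr
      intro u _
      exact (hsymm u v).symm
    have h2 : (univ.filter fun u => u ≠ v ∧ (A u v ∨ A v u)) =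
        (S.filter fun u => u ≠ v ∧ (A u v ∨ A v u)) ∪
          ((univ \ S).filter fun u => u ≠ v ∧ (A u v ∨ A v u)) := by
      rw [← Finset.filter_union, Finset.union_sdiff_of_subset (Finset.subset_univ S)]
    rw [h1, h2, Finset.card_union_of_disjoint
      (Finset.disjoint_filter_filter Finset.disjoint_sdiff)]
  -- Fubini for cross pairs
  have hfub : ∑ u ∈ S, dC u = ∑ v ∈ univ \ S, dS v := by
    simp only [dS, dC, Finset.card_filter]
    rw [Finset.sum_comm]
    refine Finset.sum_congr rfl fun v hv => Finset.sum_congr rfl fun u hu => ?_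
    exact if_congr (hsymm v u) rfl rfl
  -- every vertex outside S has at least two neighbors in S
  have hout : ∀ v ∈ univ \ S, 2 ≤ dS v := by
    intro v hv
    rw [Finset.mem_sdiff] at hv
    refine le_trans (hS.2 v hv.2) (Finset.card_le_card ?_)
    intro u hu
    rw [Finset.mem_filter] at *
    exact ⟨hu.1, fun h => hloopless v (h ▸ hu.2), Or.inl hu.2⟩
  -- every vertex of S has a neighbor in S
  have hin : ∀ v ∈ S, 1 ≤ dS v := by
    intro v hv
    obtain ⟨u, huS, hu1, hu2⟩ := hS.1 v hv
    refine Finset.card_pos.mpr ⟨u, ?_⟩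
    rw [Finset.mem_filter]
    exact ⟨huS, hu1, hu2⟩
  -- end and penultimate vertex sets
  let EndF : Finset V := univ.filter (fun v => IsEndVertex A v)
  let PenF : Finset V := univ.filter (fun v => IsPenultimate A v)
  have hecard : EndF.card = e := by
    rw [he, Nat.card_eq_fintype_card, Fintype.card_subtype]
  have hpcard : PenF.card = p := by
    rw [hp, Nat.card_eq_fintype_card, Fintype.card_subtype]
  have hPenSsub : PenF ⊆ S := fun w hw => hPenS w (Finset.mem_filter.mp hw).2
  have hEndSsub : EndF ⊆ S := fun u hu => hEndS u (Finset.mem_filter.mp hu).2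
  -- the sum of dS over penultimate vertices is at least e
  have hPenSum : EndF.card ≤ ∑ w ∈ PenF, dS w := by
    have h1 : ∀ w ∈ PenF, (EndF.filter fun u => u ≠ w ∧ (A u w ∨ A w u)).card ≤ dS w :=
      fun w _ => Finset.card_le_card (Finset.filter_subset_filter _ hEndSsub)
    have h2 : ∀ u ∈ EndF, 1 ≤ (PenF.filter fun w => u ≠ w ∧ (A u w ∨ A w u)).card := by
      intro u hu
      rw [Finset.mem_filter] at hu
      obtain ⟨w, ⟨hwu, hadj⟩, hpen⟩ := hEndNbr u hu.2
      refine Finset.card_pos.mpr ⟨w, ?_⟩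
      simp only [PenF, Finset.mem_filter, Finset.mem_univ, true_and]
      exact ⟨hpen, hwu.symm, hadj.symm⟩
    calc EndF.card = ∑ _u ∈ EndF, 1 := by simp
      _ ≤ ∑ u ∈ EndF, (PenF.filter fun w => u ≠ w ∧ (A u w ∨ A w u)).card :=
          Finset.sum_le_sum h2
      _ = ∑ w ∈ PenF, (EndF.filter fun u => u ≠ w ∧ (A u w ∨ A w u)).card := by
          simp only [Finset.card_filter]
          rw [Finset.sum_comm]
      _ ≤ ∑ w ∈ PenF, dS w := Finset.sum_le_sum h1
  -- sum of dS over S is at least |S| + e - p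
  have hSsum : S.card + e ≤ (∑ v ∈ S, dS v) + p := by
    have hsplit : (∑ v ∈ S \ PenF, dS v) + (∑ v ∈ PenF, dS v) = ∑ v ∈ S, dS v :=
      Finset.sum_sdiff hPenSsub
    have h1 : (S \ PenF).card ≤ ∑ v ∈ S \ PenF, dS v := by
      calc (S \ PenF).card = ∑ _v ∈ S \ PenF, 1 := by simp
        _ ≤ ∑ v ∈ S \ PenF, dS v :=
            Finset.sum_le_sum fun v hv => hin v (Finset.mem_sdiff.mp hv).1
    have h2 : (S \ PenF).card + PenF.card = S.card :=
      Finset.card_sdiff_add_card_eq_card hPenSsub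
    omega
  -- degree sums
  have hhand : ∑ v : V, G.degree v = 2 * G.edgeFinset.card :=
    G.sum_degrees_eq_twice_card_edges
  have htreecard : G.edgeFinset.card + 1 = Fintype.card V := htree.card_edgeFinset
  have hsplitdeg : (∑ v ∈ univ \ S, G.degree v) + ∑ v ∈ S, G.degree v
      = ∑ v : V, G.degree v := Finset.sum_sdiff (Finset.subset_univ S)
  have hSdeg : ∑ v ∈ S, G.degree v = (∑ v ∈ S, dS v) + ∑ v ∈ S, dC v := by
    rw [← Finset.sum_add_distrib]
    exact Finset.sum_congr rfl fun v _ => hdeg v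
  have hCdeg : ∑ v ∈ univ \ S, dS v ≤ ∑ v ∈ univ \ S, G.degree v :=
    Finset.sum_le_sum fun v _ => by rw [hdeg v]; omega
  have houtsum : 2 * (univ \ S).card ≤ ∑ v ∈ univ \ S, dS v := by
    calc 2 * (univ \ S).card = ∑ _v ∈ univ \ S, 2 := by
          rw [Finset.sum_const, smul_eq_mul, mul_comm]
      _ ≤ ∑ v ∈ univ \ S, dS v := Finset.sum_le_sum hout
  have hcards : (univ \ S).card + S.card = Fintype.card V := by
    rw [Finset.card_sdiff_add_card_eq_card (Finset.subset_univ S), Finset.card_univ]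
  omega
end

section
/- Let S be a directed star of order n ≥ 3 with central vertex u, where a = deg⁺(u) and b = deg⁻(u) (so n = a + b + 1). Then L₂ᵗ(S) + L₂ᵗ(S⁻¹) equals n + 1 if a = 0 or b = 0 or a = b = 1; equals n + 2 if min{a,b} = 1 and max{a,b} ≥ 2; and equals n + 3 if a ≥ 2 and b ≥ 2. In particular, L₂ᵗ(S) + L₂ᵗ(S⁻¹) ≤ 16n/9. -/
open Finset

variable {V : Type*}

private lemma star_L2t {V : Type*} [Fintype V] [DecidableEq V] (A : V → V → Prop) [DecidableRel A]
    (hloopless : ∀ v : V, ¬ A v v) (u : V)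
    (hstar : ∀ x y : V, A x y → x = u ∨ y = u)
    (hcover : ∀ v : V, v ≠ u → (A u v ∨ A v u))
    (horient : ∀ v : V, ¬ (A u v ∧ A v u))
    (h2ab : 2 ≤ outDeg A u + inDeg A u) :
    total2LimitedPackingNumber A = max 2 (inDeg A u + min (outDeg A u) 2) := by
  classical
  set a := outDeg A u with ha
  set b := inDeg A u with hb
  set P : Finset V := univ.filter (fun v => A u v) with hP
  set M : Finset V := univ.filter (fun v => A v u) with hM
  have hmemP : ∀ x, x ∈ P ↔ A u x := by intro x; simp [hP]
  have hmemM : ∀ x, x ∈ M ↔ A x u := by intro x; simp [hM]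
  have hPcard : P.card = a := rfl
  have hMcard : M.card = b := rfl
  -- upper bound for every packing
  have hub : ∀ m ∈ {m | ∃ B : Finset V, IsTotal2LimitedPacking A B ∧ B.card = m},
      m ≤ max 2 (b + min a 2) := by
    rintro m ⟨B, ⟨h1, h2⟩, rfl⟩
    by_cases huB : u ∈ B
    · have hle1 := h1 u huB
      have hsub : B ⊆ insert u (B.filter fun v => v ≠ u ∧ (A v u ∨ A u v)) := by
        intro x hx
        by_cases hxu : x = u
        · simp [hxu]
        · refine mem_insert_of_mem (mem_filter.2 ⟨hx, hxu, ?_⟩)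
          rcases hcover x hxu with h | h
          · exact Or.inr h
          · exact Or.inl h
      have hc1 : B.card ≤ (B.filter fun v => v ≠ u ∧ (A v u ∨ A u v)).card + 1 :=
        le_trans (card_le_card hsub) (card_insert_le _ _)
      have : B.card ≤ 2 := by omega
      exact le_trans this (le_max_left _ _)
    · have h2u := h2 u huB
      have hsub : B ⊆ (B ∩ M) ∪ (B ∩ P) := by
        intro x hx
        have hxu : x ≠ u := fun h => huB (h ▸ hx)
        rcases hcover x hxu with h | h
        · exact mem_union_right _ (mem_inter.2 ⟨hx, (hmemP x).2 h⟩)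
        · exact mem_union_left _ (mem_inter.2 ⟨hx, (hmemM x).2 h⟩)
      have hBP : (B ∩ P).card ≤ min a 2 := by
        refine le_min (le_trans (card_le_card inter_subset_right) (le_of_eq hPcard)) ?_
        have heq : B ∩ P = B.filter fun v => A u v := by
          ext x; simp [mem_inter, mem_filter, hmemP x, and_assoc]
        calc (B ∩ P).card = (B.filter fun v => A u v).card := by rw [heq]
          _ ≤ 2 := h2u
      have hBM : (B ∩ M).card ≤ b :=
        le_trans (card_le_card inter_subset_right) (le_of_eq hMcard)
      have hcu : B.card ≤ (B ∩ M).card + (B ∩ P).card :=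
        le_trans (card_le_card hsub) (card_union_le _ _)
      have : B.card ≤ b + min a 2 := by omega
      exact le_trans this (le_max_right _ _)
  have hne : {m | ∃ B : Finset V, IsTotal2LimitedPacking A B ∧ B.card = m}.Nonempty :=
    ⟨0, ∅, ⟨fun v hv => absurd hv (notMem_empty v), fun v _ => by simp⟩, rfl⟩
  have hbdd : BddAbove {m | ∃ B : Finset V, IsTotal2LimitedPacking A B ∧ B.card = m} :=
    ⟨max 2 (b + min a 2), hub⟩
  -- a leaf
  have hw : ∃ w, w ≠ u ∧ (A u w ∨ A w u) := by
    have : 0 < a ∨ 0 < b := by omega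
    rcases this with h | h
    · obtain ⟨w, hwP⟩ := card_pos.mp (hPcard ▸ h)
      have hAuw := (hmemP w).1 hwP
      exact ⟨w, fun h' => hloopless u (h' ▸ hAuw), Or.inl hAuw⟩
    · obtain ⟨w, hwM⟩ := card_pos.mp (hMcard ▸ h)
      have hAwu := (hmemM w).1 hwM
      exact ⟨w, fun h' => hloopless u (h' ▸ hAwu), Or.inr hAwu⟩
  obtain ⟨w, hwu, hwadj⟩ := hw
  -- packing {u, w}
  have hcard2 : ({u, w} : Finset V).card = 2 := by
    rw [card_insert_of_notMem (by simp [Ne.symm hwu]), card_singleton]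
  have hpack1 : IsTotal2LimitedPacking A ({u, w} : Finset V) := by
    constructor
    · intro v hv
      have hsub : (({u, w} : Finset V).filter fun x => x ≠ v ∧ (A x v ∨ A v x)) ⊆
          ({u, w} : Finset V).erase v := by
        intro x hx
        rw [mem_filter] at hx
        exact mem_erase.2 ⟨hx.2.1, hx.1⟩
      calc _ ≤ (({u, w} : Finset V).erase v).card := card_le_card hsub
        _ = 1 := by rw [card_erase_of_mem hv, hcard2]
    · intro v _
      exact le_trans (card_filter_le _ _) (le_of_eq hcard2)
  -- packing M ∪ P'
  obtain ⟨P', hP'sub, hP'card⟩ := Finset.exists_subset_card_eq (s := P) (n := min a 2)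
    (hPcard ▸ min_le_left a 2)
  have hdisj : Disjoint M P' := by
    rw [Finset.disjoint_left]
    intro x hxM hxP'
    exact horient x ⟨(hmemP x).1 (hP'sub hxP'), (hmemM x).1 hxM⟩
  have hB2ne : ∀ x ∈ M ∪ P', x ≠ u := by
    intro x hx h'
    subst h'
    rcases mem_union.mp hx with h | h
    · exact hloopless x ((hmemM x).1 h)
    · exact hloopless x ((hmemP x).1 (hP'sub h))
  have hcardB2 : (M ∪ P').card = b + min a 2 := by
    rw [card_union_of_disjoint hdisj, hMcard, hP'card]
  have hpack2 : IsTotal2LimitedPacking A (M ∪ P') := by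
    constructor
    · intro v hv
      have : ((M ∪ P').filter fun x => x ≠ v ∧ (A x v ∨ A v x)) = ∅ := by
        rw [filter_eq_empty_iff]
        rintro x hx ⟨hxv, hadj⟩
        rcases hadj with h | h
        · rcases hstar x v h with h' | h'
          · exact hB2ne x hx h'
          · exact hB2ne v hv h'
        · rcases hstar v x h with h' | h'
          · exact hB2ne v hv h'
          · exact hB2ne x hx h'
      simp [this]
    · intro v hv
      by_cases hvu : v = u
      · subst hvu
        have hsub : ((M ∪ P').filter fun x => A v x) ⊆ P' := by
          intro x hx
          rw [mem_filter] at hx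
          rcases mem_union.mp hx.1 with h | h
          · exact absurd ⟨hx.2, (hmemM x).1 h⟩ (horient x)
          · exact h
        calc _ ≤ P'.card := card_le_card hsub
          _ = min a 2 := hP'card
          _ ≤ 2 := min_le_right _ _
      · have : ((M ∪ P').filter fun x => A v x) = ∅ := by
          rw [filter_eq_empty_iff]
          intro x hx hA
          rcases hstar v x hA with h | h
          · exact hvu h
          · exact hB2ne x hx h
        simp [this]
  refine le_antisymm (csSup_le hne hub) (max_le ?_ ?_)
  · exact le_csSup hbdd ⟨{u, w}, hpack1, hcard2⟩
  · exact le_csSup hbdd ⟨M ∪ P', hpack2, hcardB2⟩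

/-- For a directed star `S` of order `n ≥ 3` with central vertex `u`,
`a = deg⁺(u)`, `b = deg⁻(u)`: `L₂ᵗ(S) + L₂ᵗ(S⁻¹)` equals `n+1` if `a = 0`, `b = 0` or
`a = b = 1`; equals `n+2` if `min{a,b} = 1` and `max{a,b} ≥ 2`; equals `n+3` if
`a, b ≥ 2`. In particular `L₂ᵗ(S) + L₂ᵗ(S⁻¹) ≤ 16n/9`. -/
theorem stmt11 {V : Type*} [Fintype V] [DecidableEq V] (A : V → V → Prop) [DecidableRel A]
    (hloopless : ∀ v : V, ¬ A v v) (u : V)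
    (hstar : ∀ x y : V, A x y → x = u ∨ y = u)
    (hcover : ∀ v : V, v ≠ u → (A u v ∨ A v u))
    (horient : ∀ v : V, ¬ (A u v ∧ A v u))
    (n a b : ℕ) (hn : Fintype.card V = n) (h3 : 3 ≤ n)
    (ha : a = outDeg A u) (hb : b = inDeg A u) :
    ((a = 0 ∨ b = 0 ∨ (a = 1 ∧ b = 1)) →
      total2LimitedPackingNumber A + total2LimitedPackingNumber (converse A) = n + 1) ∧
    ((min a b = 1 ∧ 2 ≤ max a b) →
      total2LimitedPackingNumber A + total2LimitedPackingNumber (converse A) = n + 2) ∧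
    ((2 ≤ a ∧ 2 ≤ b) →
      total2LimitedPackingNumber A + total2LimitedPackingNumber (converse A) = n + 3) ∧
    9 * (total2LimitedPackingNumber A + total2LimitedPackingNumber (converse A))
      ≤ 16 * n := by
  classical
  have hconv_out : outDeg (converse A) u = inDeg A u := rfl
  have hconv_in : inDeg (converse A) u = outDeg A u := rfl
  have hn' : outDeg A u + inDeg A u + 1 = n := by
    have hdisj : Disjoint (univ.filter fun v => A u v) (univ.filter fun v => A v u) := by
      rw [Finset.disjoint_left]
      intro x h1 h2
      simp only [mem_filter, mem_univ, true_and] at h1 h2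
      exact horient x ⟨h1, h2⟩
    have huniv : (univ : Finset V) =
        insert u ((univ.filter fun v => A u v) ∪ (univ.filter fun v => A v u)) := by
      ext x
      simp only [mem_univ, true_iff, mem_insert, mem_union, mem_filter, true_and]
      by_cases hx : x = u
      · exact Or.inl hx
      · rcases hcover x hx with h | h
        · exact Or.inr (Or.inl h)
        · exact Or.inr (Or.inr h)
    have hu : u ∉ (univ.filter fun v => A u v) ∪ (univ.filter fun v => A v u) := by
      simp [hloopless u]
    have hc : Fintype.card V =
        ((univ.filter fun v => A u v) ∪ (univ.filter fun v => A v u)).card + 1 := by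
      have := congrArg Finset.card huniv
      rw [card_insert_of_notMem hu] at this
      rw [← Finset.card_univ, this]
    rw [card_union_of_disjoint hdisj] at hc
    unfold outDeg inDeg
    omega
  have h2ab : 2 ≤ outDeg A u + inDeg A u := by omega
  have L1 := star_L2t A hloopless u hstar hcover horient h2ab
  have L2 := star_L2t (converse A) hloopless u (fun x y h => (hstar y x h).symm)
      (fun v hv => (hcover v hv).symm) (fun v h => horient v ⟨h.2, h.1⟩)
      (by rw [hconv_out, hconv_in]; omega)
  rw [hconv_out, hconv_in] at L2
  subst ha hb
  refine ⟨fun h => ?_, fun h => ?_, fun h => ?_, ?_⟩ <;> omega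
end

section
/- For any connected finite digraph D of order n ≥ 3, L₂ᵗ(D) + L₂ᵗ(D⁻¹) ≤ 16n/9, i.e., 9 · (L₂ᵗ(D) + L₂ᵗ(D⁻¹)) ≤ 16n. -/
open Finset

variable {V : Type*}

section Aux

lemma exists_adj_of_conn [Fintype V] (A : V → V → Prop)
    (hconn : (SimpleGraph.fromRel A).Connected) (h2 : 2 ≤ Fintype.card V) (x : V) :
    ∃ u, u ≠ x ∧ (A u x ∨ A x u) := by
  obtain ⟨y, hy⟩ := Fintype.exists_ne_of_one_lt_card (by omega) x
  obtain ⟨w⟩ := hconn.preconnected x y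
  cases w with
  | nil => exact absurd rfl hy
  | cons h p =>
    rw [SimpleGraph.fromRel_adj] at h
    exact ⟨_, fun e => h.1 e.symm, h.2.symm⟩

lemma no_pair_component [Fintype V] [DecidableEq V] (A : V → V → Prop)
    (hconn : (SimpleGraph.fromRel A).Connected) (h3 : 3 ≤ Fintype.card V) (x z : V)
    (hx : ∀ u, (A u x ∨ A x u) → u = x ∨ u = z)
    (hz : ∀ u, (A u z ∨ A z u) → u = x ∨ u = z) : False := by
  have hex : ∃ y, y ≠ x ∧ y ≠ z := by
    by_contra hc
    push_neg at hc
    have hsub : (Finset.univ : Finset V) ⊆ {x, z} := by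
      intro y _
      rcases Classical.em (y = x) with h | h
      · simp [h]
      · simp [hc y h]
    have := Finset.card_le_card hsub
    have h2 : ({x, z} : Finset V).card ≤ 2 :=
      (Finset.card_insert_le _ _).trans (by simp)
    rw [Finset.card_univ] at this
    omega
  obtain ⟨y, hyx, hyz⟩ := hex
  obtain ⟨w⟩ := hconn.preconnected x y
  have key : ∀ (a b : V) (w : (SimpleGraph.fromRel A).Walk a b),
      (a = x ∨ a = z) → (b = x ∨ b = z) := by
    intro a b w
    induction w with
    | nil => exact id
    | cons h p ih =>
      intro ha
      apply ih
      rw [SimpleGraph.fromRel_adj] at h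
      rcases ha with rfl | rfl
      · exact hx _ h.2.symm
      · exact hz _ h.2.symm
  rcases key x y w (Or.inl rfl) with h | h
  · exact hyx h
  · exact hyz h

/-- neighbors of `x` inside `X` -/
def nbrIn [DecidableEq V] (A : V → V → Prop) [DecidableRel A] (X : Finset V) (x : V) :
    Finset V := X.filter (fun u => u ≠ x ∧ (A u x ∨ A x u))

/-- members of `X` adjacent with `y` (viewed from `y`) -/
def adjIn [DecidableEq V] (A : V → V → Prop) [DecidableRel A] (X : Finset V) (y : V) :
    Finset V := X.filter (fun z => A y z ∨ A z y)

lemma key_lemma [Fintype V] [DecidableEq V] (A : V → V → Prop) [DecidableRel A]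
    (hconn : (SimpleGraph.fromRel A).Connected) (h3 : 3 ≤ Fintype.card V)
    (B C : Finset V) (hB : IsTotal2LimitedPacking A B)
    (hC : IsTotal2LimitedPacking (converse A) C) :
    9 * (B.card + C.card) ≤ 16 * Fintype.card V := by
  classical
  set X : Finset V := B ∩ C with hXdef
  -- at most one X-neighbor for members of X
  have hnX : ∀ x ∈ X, (nbrIn A X x).card ≤ 1 := by
    intro x hx
    have hsub : nbrIn A X x ⊆ B.filter (fun u => u ≠ x ∧ (A u x ∨ A x u)) :=
      Finset.filter_subset_filter _ Finset.inter_subset_left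
    exact (Finset.card_le_card hsub).trans (hB.1 x (Finset.mem_inter.mp hx).1)
  -- attachment function
  have hFex : ∀ x : V, ∃ y : V, x ∈ X →
      y ∉ X ∧ ∃ z, z ∈ X ∧ (x = z ∨ (A x z ∨ A z x)) ∧ (A y z ∨ A z y) := by
    intro x
    by_cases hx : x ∈ X
    · by_cases h1 : (Finset.univ.filter (fun y => y ∉ X ∧ (A x y ∨ A y x))).Nonempty
      · obtain ⟨y, hy⟩ := h1
        rw [Finset.mem_filter] at hy
        exact ⟨y, fun _ => ⟨hy.2.1, x, hx, Or.inl rfl, hy.2.2.symm⟩⟩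
      · have hallX : ∀ u, (A x u ∨ A u x) → u ∈ X := by
          intro u hu
          by_contra huX
          exact h1 ⟨u, by simp [huX, hu]⟩
        by_cases h2 : (nbrIn A X x).Nonempty
        · obtain ⟨z, hz⟩ := h2
          have hz' := hz
          rw [nbrIn, Finset.mem_filter] at hz'
          obtain ⟨hzX, hzx, hzadj⟩ := hz'
          by_cases h4 : (Finset.univ.filter (fun y => y ∉ X ∧ (A z y ∨ A y z))).Nonempty
          · obtain ⟨y, hy⟩ := h4
            rw [Finset.mem_filter] at hy
            exact ⟨y, fun _ => ⟨hy.2.1, z, hzX, Or.inr hzadj.symm, hy.2.2.symm⟩⟩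
          · exfalso
            have hallXz : ∀ u, (A z u ∨ A u z) → u ∈ X := by
              intro u hu
              by_contra huX
              exact h4 ⟨u, by simp [huX, hu]⟩
            refine no_pair_component A hconn h3 x z ?_ ?_
            · intro u hu
              by_cases hux : u = x
              · exact Or.inl hux
              · refine Or.inr ?_
                have huX : u ∈ X := hallX u hu.symm
                have humem : u ∈ nbrIn A X x := by
                  rw [nbrIn, Finset.mem_filter]; exact ⟨huX, hux, hu⟩
                exact Finset.card_le_one.mp (hnX x hx) u humem z hz
            · intro u hu
              by_cases huz : u = z
              · exact Or.inr huz
              · refine Or.inl ?_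
                have huX : u ∈ X := hallXz u hu.symm
                have humem : u ∈ nbrIn A X z := by
                  rw [nbrIn, Finset.mem_filter]
                  exact ⟨huX, huz, hu⟩
                have hxmem : x ∈ nbrIn A X z := by
                  rw [nbrIn, Finset.mem_filter]
                  exact ⟨hx, fun e => hzx e.symm, hzadj.symm⟩
                exact Finset.card_le_one.mp (hnX z hzX) u humem x hxmem
        · exfalso
          obtain ⟨u, hux, hu⟩ := exists_adj_of_conn A hconn (by omega) x
          have huX : u ∈ X := hallX u hu.symm
          exact h2 ⟨u, by rw [nbrIn, Finset.mem_filter]; exact ⟨huX, hux, hu⟩⟩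
    · exact ⟨x, fun h => absurd h hx⟩
  choose F hF using hFex
  -- fiberwise counting
  have hmap : ∀ x ∈ X, F x ∈ Xᶜ := fun x hx => Finset.mem_compl.mpr (hF x hx).1
  have hfib := Finset.card_eq_sum_card_fiberwise hmap
  -- fiber bound
  have hfiber : ∀ y : V, (X.filter fun x => F x = y).card ≤ 2 * (adjIn A X y).card := by
    intro y
    have hsub : (X.filter fun x => F x = y) ⊆
        (adjIn A X y).biUnion (fun z => insert z (nbrIn A X z)) := by
      intro x hx
      rw [Finset.mem_filter] at hx
      obtain ⟨hxX, hFxy⟩ := hx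
      obtain ⟨hFX, z, hzX, hxz, hadj⟩ := hF x hxX
      rw [hFxy] at hadj
      have hzmem : z ∈ adjIn A X y := by
        rw [adjIn, Finset.mem_filter]; exact ⟨hzX, hadj⟩
      rw [Finset.mem_biUnion]
      refine ⟨z, hzmem, ?_⟩
      by_cases hxz' : x = z
      · rw [hxz']; exact Finset.mem_insert_self _ _
      · refine Finset.mem_insert_of_mem ?_
        rw [nbrIn, Finset.mem_filter]
        exact ⟨hxX, hxz', hxz.resolve_left hxz'⟩
    calc (X.filter fun x => F x = y).card
        ≤ ((adjIn A X y).biUnion (fun z => insert z (nbrIn A X z))).card :=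
          Finset.card_le_card hsub
      _ ≤ ∑ z ∈ adjIn A X y, (insert z (nbrIn A X z)).card := Finset.card_biUnion_le
      _ ≤ ∑ z ∈ adjIn A X y, 2 := by
          refine Finset.sum_le_sum ?_
          intro z hz
          rw [adjIn, Finset.mem_filter] at hz
          exact (Finset.card_insert_le _ _).trans (by have := hnX z hz.1; omega)
      _ = 2 * (adjIn A X y).card := by rw [Finset.sum_const, smul_eq_mul, mul_comm]
  -- adjIn bounds
  have hPbound : ∀ y ∈ B \ C, (adjIn A X y).card ≤ 1 := by
    intro y hy
    rw [Finset.mem_sdiff] at hy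
    have hsub : adjIn A X y ⊆ B.filter (fun u => u ≠ y ∧ (A u y ∨ A y u)) := by
      intro z hz
      rw [adjIn, Finset.mem_filter] at hz
      rw [Finset.mem_filter]
      have hzX := hz.1
      refine ⟨(Finset.mem_inter.mp hzX).1, fun e => ?_, hz.2.symm⟩
      · exact hy.2 (Finset.mem_inter.mp (e ▸ hzX)).2
    exact (Finset.card_le_card hsub).trans (hB.1 y hy.1)
  have hQbound : ∀ y ∈ C \ B, (adjIn A X y).card ≤ 1 := by
    intro y hy
    rw [Finset.mem_sdiff] at hy
    have hsub : adjIn A X y ⊆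
        C.filter (fun u => u ≠ y ∧ (converse A u y ∨ converse A y u)) := by
      intro z hz
      rw [adjIn, Finset.mem_filter] at hz
      rw [Finset.mem_filter]
      have hzX := hz.1
      refine ⟨(Finset.mem_inter.mp hzX).2, fun e => ?_, hz.2⟩
      · exact hy.2 (Finset.mem_inter.mp (e ▸ hzX)).1
    exact (Finset.card_le_card hsub).trans (hC.1 y hy.1)
  have hRbound : ∀ y ∈ (B ∪ C)ᶜ, (adjIn A X y).card ≤ 4 := by
    intro y hy
    rw [Finset.mem_compl, Finset.mem_union] at hy
    push_neg at hy
    have hsplit : adjIn A X y = X.filter (fun z => A y z) ∪ X.filter (fun z => A z y) := by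
      rw [adjIn, Finset.filter_or]
    have h1 : (X.filter (fun z => A y z)).card ≤ 2 := by
      refine (Finset.card_le_card ?_).trans (hB.2 y hy.1)
      exact Finset.filter_subset_filter _ Finset.inter_subset_left
    have h2 : (X.filter (fun z => A z y)).card ≤ 2 := by
      refine (Finset.card_le_card ?_).trans (hC.2 y hy.2)
      exact Finset.filter_subset_filter _ Finset.inter_subset_right
    calc (adjIn A X y).card ≤ _ + _ := hsplit ▸ Finset.card_union_le _ _
      _ ≤ 4 := by omega
  -- split the complement
  have hcompl : Xᶜ = (B \ C) ∪ (C \ B) ∪ (B ∪ C)ᶜ := by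
    ext y
    simp [hXdef, Finset.mem_compl, Finset.mem_inter, Finset.mem_union, Finset.mem_sdiff]
    tauto
  have hd1 : Disjoint (B \ C) (C \ B) := by
    rw [Finset.disjoint_left]
    intro a ha hb
    rw [Finset.mem_sdiff] at ha hb
    exact hb.2 ha.1
  have hd2 : Disjoint ((B \ C) ∪ (C \ B)) ((B ∪ C)ᶜ) := by
    rw [Finset.disjoint_left]
    intro a ha hb
    rw [Finset.mem_union, Finset.mem_sdiff, Finset.mem_sdiff] at ha
    rw [Finset.mem_compl, Finset.mem_union] at hb
    tauto
  have hXle : X.card ≤ 2 * (B \ C).card + 2 * (C \ B).card + 8 * ((B ∪ C)ᶜ).card := by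
    calc X.card = ∑ y ∈ Xᶜ, (X.filter fun x => F x = y).card := hfib
      _ ≤ ∑ y ∈ Xᶜ, 2 * (adjIn A X y).card := Finset.sum_le_sum fun y _ => hfiber y
      _ = (∑ y ∈ (B \ C), 2 * (adjIn A X y).card) + (∑ y ∈ (C \ B), 2 * (adjIn A X y).card)
          + (∑ y ∈ (B ∪ C)ᶜ, 2 * (adjIn A X y).card) := by
          rw [hcompl, Finset.sum_union hd2, Finset.sum_union hd1]
      _ ≤ (∑ _y ∈ (B \ C), 2 * 1) + (∑ _y ∈ (C \ B), 2 * 1) + (∑ _y ∈ (B ∪ C)ᶜ, 2 * 4) := by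
          gcongr with y hy y hy y hy
          · exact hPbound y hy
          · exact hQbound y hy
          · exact hRbound y hy
      _ = 2 * (B \ C).card + 2 * (C \ B).card + 8 * ((B ∪ C)ᶜ).card := by
          simp [Finset.sum_const, smul_eq_mul]; ring
  -- arithmetic
  have e1 : (B ∩ C).card + (B \ C).card = B.card := Finset.card_inter_add_card_sdiff B C
  have e2 : (C ∩ B).card + (C \ B).card = C.card := Finset.card_inter_add_card_sdiff C B
  have e2' : (C ∩ B).card = X.card := by rw [hXdef, Finset.inter_comm]
  have e3 : (B ∪ C).card + ((B ∪ C)ᶜ).card = Fintype.card V := by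
    rw [Finset.card_add_card_compl]
  have e4 : (B ∪ C).card + (B ∩ C).card = B.card + C.card :=
    Finset.card_union_add_card_inter B C
  have e5 : (B ∩ C).card = X.card := by rw [hXdef]
  omega

lemma packingNumber_spec [Fintype V] [DecidableEq V] (A : V → V → Prop) [DecidableRel A] :
    ∃ B : Finset V, IsTotal2LimitedPacking A B ∧ B.card = total2LimitedPackingNumber A := by
  have hne : {m | ∃ B : Finset V, IsTotal2LimitedPacking A B ∧ B.card = m}.Nonempty :=
    ⟨0, ∅, ⟨fun v hv => absurd hv (Finset.notMem_empty v), fun v _ => by simp⟩, rfl⟩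
  have hbdd : BddAbove {m | ∃ B : Finset V, IsTotal2LimitedPacking A B ∧ B.card = m} := by
    refine ⟨Fintype.card V, ?_⟩
    rintro m ⟨B, _, rfl⟩
    exact Finset.card_le_univ B
  obtain ⟨B, hB, hBc⟩ := Nat.sSup_mem hne hbdd
  exact ⟨B, hB, hBc⟩

lemma converse_fromRel (A : V → V → Prop) :
    SimpleGraph.fromRel (converse A) = SimpleGraph.fromRel A := by
  ext u v
  simp only [SimpleGraph.fromRel_adj, converse]
  tauto

end Aux

/-- For any connected digraph `D` of order `n ≥ 3`,
`9 · (L₂ᵗ(D) + L₂ᵗ(D⁻¹)) ≤ 16n`. -/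
theorem stmt12 {V : Type*} [Fintype V] [DecidableEq V] (A : V → V → Prop) [DecidableRel A]
    (hloopless : ∀ v : V, ¬ A v v) (hconn : (SimpleGraph.fromRel A).Connected)
    (n : ℕ) (hn : Fintype.card V = n) (h3 : 3 ≤ n) :
    9 * (total2LimitedPackingNumber A + total2LimitedPackingNumber (converse A))
      ≤ 16 * n := by
  obtain ⟨B, hBpack, hBcard⟩ := packingNumber_spec A
  obtain ⟨C, hCpack, hCcard⟩ := packingNumber_spec (converse A)
  rw [← hBcard, ← hCcard, ← hn]
  exact key_lemma A hconn (hn ▸ h3) B C hBpack hCpack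
end

section
/- For any directed tree T of order n ≥ 3, L₂ᵗ(T) + L₂ᵗ(T⁻¹) ≤ 16n/9, i.e., 9 · (L₂ᵗ(T) + L₂ᵗ(T⁻¹)) ≤ 16n. -/
open Finset

variable {V : Type*}

private lemma cross_walk' {V : Type*} {G : SimpleGraph V} {S : Set V} :
    ∀ {s t : V}, G.Walk s t → s ∈ S → t ∉ S → ∃ a b, a ∈ S ∧ b ∉ S ∧ G.Adj a b := by
  intro s t w
  induction w with
  | nil => intro hs ht; exact absurd hs ht
  | @cons u v t' hadj w ih =>
    intro hs ht
    by_cases hv : v ∈ S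
    · exact ih hv ht
    · exact ⟨u, v, hs, hv, hadj⟩

/-- For any directed tree `T` of order `n ≥ 3`,
`9 · (L₂ᵗ(T) + L₂ᵗ(T⁻¹)) ≤ 16n`. -/
theorem stmt13 {V : Type*} [Fintype V] [DecidableEq V] (A : V → V → Prop) [DecidableRel A]
    (hloopless : ∀ v : V, ¬ A v v) (htree : (SimpleGraph.fromRel A).IsTree)
    (n : ℕ) (hn : Fintype.card V = n) (h3 : 3 ≤ n) :
    9 * (total2LimitedPackingNumber A + total2LimitedPackingNumber (converse A))
      ≤ 16 * n := by
  classical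
  -- extract optimal packings B and C
  have hBmem : total2LimitedPackingNumber A ∈
      {m | ∃ B : Finset V, IsTotal2LimitedPacking A B ∧ B.card = m} := by
    apply Nat.sSup_mem
    · exact ⟨0, ∅, ⟨fun v hv => absurd hv (notMem_empty v), fun v _ => by simp⟩, rfl⟩
    · exact ⟨Fintype.card V, by rintro m ⟨B, -, rfl⟩; simpa using B.card_le_univ⟩
  have hCmem : total2LimitedPackingNumber (converse A) ∈
      {m | ∃ B : Finset V, IsTotal2LimitedPacking (converse A) B ∧ B.card = m} := by
    apply Nat.sSup_mem
    · exact ⟨0, ∅, ⟨fun v hv => absurd hv (notMem_empty v), fun v _ => by simp⟩, rfl⟩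
    · exact ⟨Fintype.card V, by rintro m ⟨B, -, rfl⟩; simpa using B.card_le_univ⟩
  obtain ⟨B, hB, hBcard⟩ := hBmem
  obtain ⟨C, hC, hCcard⟩ := hCmem
  rw [← hBcard, ← hCcard]
  set Z : Finset V := B ∩ C with hZdef
  have hZB : ∀ z ∈ Z, z ∈ B := fun z hz => (mem_inter.1 hz).1
  have hZC : ∀ z ∈ Z, z ∈ C := fun z hz => (mem_inter.1 hz).2
  -- neighborhood in Z
  set Nb : V → Finset V := fun x => Z.filter fun z => z ≠ x ∧ (A z x ∨ A x z) with hNbdef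
  -- each vertex of Z has at most one neighbor inside Z
  have hZnb : ∀ u ∈ Z, (Nb u).card ≤ 1 := by
    intro u hu
    refine le_trans (card_le_card ?_) (hB.1 u (hZB u hu))
    intro x hx
    rw [hNbdef, mem_filter] at hx
    exact mem_filter.2 ⟨hZB x hx.1, hx.2⟩
  -- each vertex of B has at most one neighbor inside Z
  have hNX : ∀ x ∈ B, (Nb x).card ≤ 1 := by
    intro x hx
    refine le_trans (card_le_card ?_) (hB.1 x hx)
    intro z hz
    rw [hNbdef, mem_filter] at hz
    exact mem_filter.2 ⟨hZB z hz.1, hz.2⟩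
  have hNY : ∀ x ∈ C, (Nb x).card ≤ 1 := by
    intro x hx
    refine le_trans (card_le_card ?_) (hC.1 x hx)
    intro z hz
    rw [hNbdef, mem_filter] at hz
    refine mem_filter.2 ⟨hZC z hz.1, hz.2.1, ?_⟩
    simp only [converse]
    exact hz.2.2.symm
  have hNW : ∀ x, x ∉ B → x ∉ C → (Nb x).card ≤ 4 := by
    intro x hxB hxC
    have hsub : Nb x ⊆ (B.filter fun u => A x u) ∪ (C.filter fun u => A u x) := by
      intro z hz
      rw [hNbdef, mem_filter] at hz
      obtain ⟨hzZ, hne, harc⟩ := hz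
      rcases harc with h | h
      · exact mem_union_right _ (mem_filter.2 ⟨hZC z hzZ, h⟩)
      · exact mem_union_left _ (mem_filter.2 ⟨hZB z hzZ, h⟩)
    have h1 := hB.2 x hxB
    have h2 : (C.filter fun u => A u x).card ≤ 2 := by
      have := hC.2 x hxC
      simpa [converse] using this
    calc (Nb x).card ≤ ((B.filter fun u => A x u) ∪ (C.filter fun u => A u x)).card :=
          card_le_card hsub
      _ ≤ (B.filter fun u => A x u).card + (C.filter fun u => A u x).card := card_union_le _ _
      _ ≤ 4 := by omega
  -- connectivity
  have hpc : (SimpleGraph.fromRel A).Preconnected := htree.isConnected.preconnected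
  -- every z in Z has an escape: a vertex u in Z (z itself or its Z-neighbor)
  -- adjacent to some v outside Z
  have hout : ∀ z ∈ Z, ∃ u v, u ∈ Z ∧ v ∉ Z ∧ (u ≠ v ∧ (A u v ∨ A v u)) ∧
      (u = z ∨ (z ≠ u ∧ (A z u ∨ A u z))) := by
    intro z hz
    by_cases h1 : ∃ v, v ∉ Z ∧ z ≠ v ∧ (A z v ∨ A v z)
    · obtain ⟨v, hv, hne, harc⟩ := h1
      exact ⟨z, v, hz, hv, ⟨hne, harc⟩, Or.inl rfl⟩
    · obtain ⟨w, hw⟩ := Fintype.exists_ne_of_one_lt_card (by omega) z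
      obtain ⟨wk⟩ := hpc z w
      obtain ⟨a, b, ha, hb, hab⟩ := cross_walk' (S := {z}) wk rfl (by simpa using hw)
      rw [Set.mem_singleton_iff] at ha
      rw [ha, SimpleGraph.fromRel_adj] at hab
      clear hb ha
      have hbZ : b ∈ Z := by
        by_contra hbZ
        exact h1 ⟨b, hbZ, hab.1, hab.2⟩
      have hex : ∃ t, t ∉ ({z, b} : Finset V) := by
        by_contra hcon
        push_neg at hcon
        have hsub : (univ : Finset V) ⊆ {z, b} := fun x _ => hcon x
        have h2 := card_le_card hsub
        have h22 : ({z, b} : Finset V).card ≤ 2 :=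
          le_trans (card_insert_le _ _) (by simp)
        rw [card_univ, hn] at h2
        omega
      obtain ⟨t, ht⟩ := hex
      obtain ⟨wk2⟩ := hpc z t
      have htS : t ∉ ({x | x = z ∨ x = b} : Set V) := by
        simp only [Set.mem_setOf_eq]
        simpa using ht
      obtain ⟨a2, b2, ha2, hb2, hab2⟩ :=
        cross_walk' (S := ({x | x = z ∨ x = b} : Set V)) wk2 (Or.inl rfl) htS
      rw [SimpleGraph.fromRel_adj] at hab2
      simp only [Set.mem_setOf_eq] at ha2 hb2
      push_neg at hb2
      rcases ha2 with h | h
      · -- a2 = z; b2 is another neighbor of z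
        rw [h] at hab2
        have hb2Z : b2 ∈ Z := by
          by_contra hb2Z
          exact h1 ⟨b2, hb2Z, hab2.1, hab2.2⟩
        exfalso
        have hpair : ({b, b2} : Finset V) ⊆ Nb z := by
          intro x hx
          rw [mem_insert, mem_singleton] at hx
          rcases hx with rfl | rfl
          · exact mem_filter.2 ⟨hbZ, hab.1.symm, hab.2.symm⟩
          · exact mem_filter.2 ⟨hb2Z, hb2.1, hab2.2.symm⟩
        have h2le : 2 ≤ (Nb z).card := by
          have hcc := card_le_card hpair
          rwa [card_pair (fun hh => hb2.2 hh.symm)] at hcc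
        have := hZnb z hz
        omega
      · -- a2 = b
        rw [h] at hab2
        by_cases hb2Z : b2 ∈ Z
        · exfalso
          have hpair : ({z, b2} : Finset V) ⊆ Nb b := by
            intro x hx
            rw [mem_insert, mem_singleton] at hx
            rcases hx with rfl | rfl
            · exact mem_filter.2 ⟨hz, hab.1, hab.2⟩
            · exact mem_filter.2 ⟨hb2Z, hab2.1.symm, hab2.2.symm⟩
          have h2le : 2 ≤ (Nb b).card := by
            have hcc := card_le_card hpair
            rwa [card_pair (fun hh => hb2.1 hh.symm)] at hcc
          have := hZnb b hbZ
          omega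
        · exact ⟨b, b2, hbZ, hb2Z, hab2, Or.inr ⟨hab.1, hab.2⟩⟩
  choose! fu fv hfu hfv hfadj hflink using hout
  -- double counting
  have step1 : Z.card = ∑ x ∈ univ \ Z, (Z.filter fun z => fv z = x).card :=
    card_eq_sum_card_fiberwise (fun z hz => mem_sdiff.2 ⟨mem_univ _, hfv z hz⟩)
  have step2 : ∀ x ∈ univ \ Z, (Z.filter fun z => fv z = x).card ≤ 2 * (Nb x).card := by
    intro x hx
    have hsub : (Z.filter fun z => fv z = x) ⊆
        (Nb x) ∪ (Nb x).biUnion (fun u' => Z.filter fun z => z ≠ u' ∧ (A z u' ∨ A u' z)) := by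
      intro z hzf
      rw [mem_filter] at hzf
      obtain ⟨hzZ, hzx⟩ := hzf
      rcases hflink z hzZ with h | h
      · apply mem_union_left
        have := hfadj z hzZ
        rw [h, hzx] at this
        exact mem_filter.2 ⟨hzZ, this⟩
      · apply mem_union_right
        refine mem_biUnion.2 ⟨fu z, ?_, mem_filter.2 ⟨hzZ, h⟩⟩
        have := hfadj z hzZ
        rw [hzx] at this
        exact mem_filter.2 ⟨hfu z hzZ, this⟩
    calc (Z.filter fun z => fv z = x).card
        ≤ _ := card_le_card hsub
      _ ≤ (Nb x).card + ((Nb x).biUnion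
            (fun u' => Z.filter fun z => z ≠ u' ∧ (A z u' ∨ A u' z))).card := card_union_le _ _
      _ ≤ (Nb x).card + ∑ u' ∈ Nb x,
            (Z.filter fun z => z ≠ u' ∧ (A z u' ∨ A u' z)).card := by
          gcongr
          exact card_biUnion_le
      _ ≤ (Nb x).card + (Nb x).card * 1 := by
          gcongr
          refine sum_le_card_nsmul _ _ 1 (fun u' hu' => ?_) |>.trans (by simp)
          have hu'Z : u' ∈ Z := (mem_filter.1 hu').1
          exact hZnb u' hu'Z
      _ ≤ 2 * (Nb x).card := by omega
  have split : (univ \ Z) = ((B ∪ C) \ Z) ∪ (univ \ (B ∪ C)) := by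
    ext x
    simp only [mem_sdiff, mem_union, mem_univ, true_and, hZdef, mem_inter]
    tauto
  have hdisj : Disjoint ((B ∪ C) \ Z) (univ \ (B ∪ C)) := by
    rw [disjoint_left]
    intro x h1 h2
    exact (mem_sdiff.1 h2).2 (mem_sdiff.1 h1).1
  have bigbound : Z.card ≤ ((B ∪ C) \ Z).card * 2 + (univ \ (B ∪ C)).card * 8 := by
    calc Z.card = ∑ x ∈ univ \ Z, (Z.filter fun z => fv z = x).card := step1
      _ ≤ ∑ x ∈ univ \ Z, 2 * (Nb x).card := sum_le_sum step2
      _ = ∑ x ∈ (B ∪ C) \ Z, 2 * (Nb x).card + ∑ x ∈ univ \ (B ∪ C), 2 * (Nb x).card := by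
          rw [split, sum_union hdisj]
      _ ≤ ((B ∪ C) \ Z).card * 2 + (univ \ (B ∪ C)).card * 8 := by
          gcongr with x hx x hx
          · refine sum_le_card_nsmul _ _ 2 (fun x hx => ?_) |>.trans (by simp [mul_comm])
            have hx' := mem_sdiff.1 hx
            rcases mem_union.1 hx'.1 with hxB | hxC
            · have := hNX x hxB; omega
            · have := hNY x hxC; omega
          · refine sum_le_card_nsmul _ _ 8 (fun x hx => ?_) |>.trans (by simp [mul_comm])
            have hx' := mem_sdiff.1 hx
            have hxB : x ∉ B := fun h => hx'.2 (mem_union_left _ h)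
            have hxC : x ∉ C := fun h => hx'.2 (mem_union_right _ h)
            have := hNW x hxB hxC; omega
  -- arithmetic
  have hZsub : Z ⊆ B ∪ C := inter_subset_left.trans subset_union_left
  have hpz : ((B ∪ C) \ Z).card + Z.card = (B ∪ C).card := card_sdiff_add_card_eq_card hZsub
  have hm : (univ \ (B ∪ C)).card + (B ∪ C).card = n := by
    have := card_sdiff_add_card_eq_card (subset_univ (B ∪ C))
    rwa [card_univ, hn] at this
  have hsum : (B ∪ C).card + Z.card = B.card + C.card := card_union_add_card_inter B C
  omega
end

section
/- For any connected finite digraph D of order n ≥ 3, L₂ᵗ(D) · L₂ᵗ(D⁻¹) ≤ 64n²/81, i.e., 81 · L₂ᵗ(D) · L₂ᵗ(D⁻¹) ≤ 64n². -/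
open Finset

variable {V : Type*}

section Key

open Classical in
/-- Pair lemma: a vertex of `B` cannot have two distinct neighbors in `B`. -/
private lemma pair_absurd {V : Type*} [Fintype V] [DecidableEq V] (A : V → V → Prop)
    [DecidableRel A] {B : Finset V}
    (h : ∀ v ∈ B, (B.filter fun u => u ≠ v ∧ (A u v ∨ A v u)).card ≤ 1)
    {v u w : V} (hv : v ∈ B) (hu : u ∈ B) (hw : w ∈ B) (huw : u ≠ w)
    (h1 : u ≠ v ∧ (A u v ∨ A v u)) (h2 : w ≠ v ∧ (A w v ∨ A v w)) : False := by
  have hsub : ({u, w} : Finset V) ⊆ B.filter fun x => x ≠ v ∧ (A x v ∨ A v x) := by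
    intro x hx
    simp only [Finset.mem_insert, Finset.mem_singleton] at hx
    rcases hx with rfl | rfl <;> simp [Finset.mem_filter, hu, hw, h1, h2, h1.1, h2.1, h1.2, h2.2]
  have hle := Finset.card_le_card hsub
  rw [Finset.card_pair huw] at hle
  have := h v hv
  omega

open Classical in
private lemma key_sum {V : Type*} [Fintype V] [DecidableEq V] (A : V → V → Prop)
    [DecidableRel A] (hconn : (SimpleGraph.fromRel A).Connected)
    (h3 : 3 ≤ Fintype.card V) {B B' : Finset V}
    (hB : IsTotal2LimitedPacking A B) (hB' : IsTotal2LimitedPacking (converse A) B') :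
    9 * (B.card + B'.card) ≤ 16 * Fintype.card V := by
  classical
  set G := SimpleGraph.fromRel A with hG
  have hGadj : ∀ u v : V, G.Adj u v ↔ u ≠ v ∧ (A u v ∨ A v u) := by
    intro u v; rw [hG, SimpleGraph.fromRel_adj]
  set I : Finset V := B ∩ B' with hI
  have hIB : I ⊆ B := Finset.inter_subset_left
  have hIB' : I ⊆ B' := Finset.inter_subset_right
  set T : Finset V := I.filter (fun v => ∃ u, u ∉ I ∧ u ≠ v ∧ (A u v ∨ A v u)) with hT
  have hTI : T ⊆ I := Finset.filter_subset _ _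
  -- every vertex has a neighbor
  have hex : ∀ v : V, ∃ u, u ≠ v ∧ (A u v ∨ A v u) := by
    intro v
    obtain ⟨w, hw⟩ := Fintype.exists_ne_of_one_lt_card (by omega) v
    obtain ⟨p⟩ := hconn.preconnected v w
    obtain ⟨d, _, hd1, hd2⟩ := p.exists_boundary_dart ({v} : Set V) rfl
      (by simpa using hw)
    have hadj := d.adj
    rw [hGadj] at hadj
    rw [Set.mem_singleton_iff] at hd1 hd2
    exact ⟨d.snd, hd2, by rw [← hd1]; exact hadj.2.symm⟩
  -- crossing lemma from connectivity
  have hcross : ∀ v u : V, v ≠ u →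
      (∀ w, (w ≠ v ∧ (A w v ∨ A v w)) → w = u) →
      (∀ w, (w ≠ u ∧ (A w u ∨ A u w)) → w = v) → False := by
    intro v u hvu hv hu
    have hz : ∃ z, z ∉ ({v, u} : Finset V) := by
      by_contra hzz
      push_neg at hzz
      have hsub : (Finset.univ : Finset V) ⊆ {v, u} := fun z _ => hzz z
      have := Finset.card_le_card hsub
      rw [Finset.card_univ] at this
      have h2 : ({v, u} : Finset V).card ≤ 2 := Finset.card_insert_le _ _ |>.trans (by simp)
      omega
    obtain ⟨z, hz⟩ := hz
    obtain ⟨p⟩ := hconn.preconnected v z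
    have hzS : z ∉ ({v, u} : Set V) := by
      simp only [Finset.mem_insert, Finset.mem_singleton] at hz
      simp only [Set.mem_insert_iff, Set.mem_singleton_iff]
      tauto
    obtain ⟨d, _, hd1, hd2⟩ := p.exists_boundary_dart ({v, u} : Set V) (by simp) hzS
    have hadj := d.adj
    rw [hGadj] at hadj
    rcases hd1 with h1 | h1
    · -- d.fst = v
      have : d.snd = u := hv d.snd ⟨by rw [← h1]; exact (Ne.symm hadj.1), by rw [← h1]; exact hadj.2.symm⟩
      exact hd2 (by rw [this]; right; rfl)
    · have h1 : d.fst = u := h1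
      have : d.snd = v := hu d.snd ⟨by rw [← h1]; exact (Ne.symm hadj.1), by rw [← h1]; exact hadj.2.symm⟩
      exact hd2 (by rw [this]; left; rfl)
  -- every vertex of I \ T has a neighbor in T
  have hkey : ∀ v ∈ I \ T, ∃ u, u ∈ T ∧ u ≠ v ∧ (A u v ∨ A v u) := by
    intro v hv
    rw [Finset.mem_sdiff] at hv
    obtain ⟨hvI, hvT⟩ := hv
    have hallI : ∀ u, (u ≠ v ∧ (A u v ∨ A v u)) → u ∈ I := by
      intro u hu
      by_contra huI
      exact hvT (Finset.mem_filter.2 ⟨hvI, u, huI, hu⟩)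
    obtain ⟨u, hu⟩ := hex v
    have huI : u ∈ I := hallI u hu
    refine ⟨u, ?_, hu⟩
    rw [hT, Finset.mem_filter]
    refine ⟨huI, ?_⟩
    by_contra hnot
    push_neg at hnot
    -- all neighbors of u are in I as well
    have hallIu : ∀ w, (w ≠ u ∧ (A w u ∨ A u w)) → w ∈ I := by
      intro w hw
      by_contra hwI
      have := hnot w hwI hw.1
      tauto
    refine hcross v u (Ne.symm hu.1) ?_ ?_
    · intro w hw
      by_contra hwu
      exact pair_absurd A hB.1 (hIB hvI) (hIB huI) (hIB (hallI w hw)) (Ne.symm hwu) hu hw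
    · intro w hw
      by_contra hwv
      have hvnb : v ≠ u ∧ (A v u ∨ A u v) := ⟨Ne.symm hu.1, hu.2.symm⟩
      exact pair_absurd A hB.1 (hIB huI) (hIB hvI) (hIB (hallIu w hw)) (Ne.symm hwv) hvnb hw
  -- |I \ T| ≤ |T|
  have hclaim1 : (I \ T).card ≤ T.card := by
    have hmaps : ∀ v ∈ I \ T,
        (if h : ∃ u, u ∈ T ∧ u ≠ v ∧ (A u v ∨ A v u) then h.choose else v) ∈ T := by
      intro v hv
      rw [dif_pos (hkey v hv)]
      exact (hkey v hv).choose_spec.1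
    refine Finset.card_le_card_of_injOn _ hmaps ?_
    intro v1 hv1 v2 hv2 heq
    simp only [Finset.coe_sdiff, Set.mem_diff, Finset.mem_coe] at hv1 hv2
    have hv1' : v1 ∈ I \ T := Finset.mem_sdiff.2 hv1
    have hv2' : v2 ∈ I \ T := Finset.mem_sdiff.2 hv2
    beta_reduce at heq
    rw [dif_pos (hkey v1 hv1'), dif_pos (hkey v2 hv2')] at heq
    obtain ⟨hu1T, hu1⟩ := (hkey v1 hv1').choose_spec
    obtain ⟨hu2T, hu2⟩ := (hkey v2 hv2').choose_spec
    set u := (hkey v1 hv1').choose with hu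
    by_contra hne
    rw [← heq] at hu2
    exact pair_absurd A hB.1 (hIB (hTI hu1T)) (hIB (Finset.mem_sdiff.1 hv1').1)
      (hIB (Finset.mem_sdiff.1 hv2').1) hne
      ⟨Ne.symm hu1.1, hu1.2.symm⟩ ⟨Ne.symm hu2.1, hu2.2.symm⟩
  -- bound T via outside vertices
  have hbound : ∀ u, u ∉ I →
      (I.filter (fun v => u ≠ v ∧ (A u v ∨ A v u))).card ≤
        (if u ∈ B then 1 else if u ∈ B' then 1 else 4) := by
    intro u huI
    by_cases huB : u ∈ B
    · rw [if_pos huB]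
      refine le_trans (Finset.card_le_card ?_) (hB.1 u huB)
      intro v hv
      rw [Finset.mem_filter] at hv ⊢
      exact ⟨hIB hv.1, Ne.symm hv.2.1, hv.2.2.symm⟩
    · rw [if_neg huB]
      by_cases huB' : u ∈ B'
      · rw [if_pos huB']
        refine le_trans (Finset.card_le_card ?_) (hB'.1 u huB')
        intro v hv
        rw [Finset.mem_filter] at hv ⊢
        refine ⟨hIB' hv.1, Ne.symm hv.2.1, ?_⟩
        unfold converse
        exact hv.2.2
      · rw [if_neg huB']
        have hsub : I.filter (fun v => u ≠ v ∧ (A u v ∨ A v u)) ⊆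
            (B.filter fun w => A u w) ∪ (B'.filter fun w => converse A u w) := by
          intro v hv
          rw [Finset.mem_filter] at hv
          rw [Finset.mem_union, Finset.mem_filter, Finset.mem_filter]
          rcases hv.2.2 with h | h
          · exact Or.inl ⟨hIB hv.1, h⟩
          · exact Or.inr ⟨hIB' hv.1, h⟩
        refine le_trans (Finset.card_le_card hsub) ?_
        refine le_trans (Finset.card_union_le _ _) ?_
        have := hB.2 u huB
        have := hB'.2 u huB'
        omega
  have hclaim2 : T.card ≤ (B \ B').card + (B' \ B).card + 4 * (Finset.univ \ (B ∪ B')).card := by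
    have hTsub : T ⊆ (Finset.univ \ I).biUnion
        (fun u => I.filter (fun v => u ≠ v ∧ (A u v ∨ A v u))) := by
      intro v hv
      rw [hT, Finset.mem_filter] at hv
      obtain ⟨hvI, u, huI, hu⟩ := hv
      rw [Finset.mem_biUnion]
      exact ⟨u, Finset.mem_sdiff.2 ⟨Finset.mem_univ u, huI⟩, Finset.mem_filter.2 ⟨hvI, hu⟩⟩
    refine le_trans (Finset.card_le_card hTsub) ?_
    refine le_trans (Finset.card_biUnion_le) ?_
    have hsum : ∀ s : Finset V, (∀ u ∈ s, u ∉ I) →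
        (∑ u ∈ s, (I.filter (fun v => u ≠ v ∧ (A u v ∨ A v u))).card) ≤
        ∑ u ∈ s, (if u ∈ B then 1 else if u ∈ B' then 1 else 4) :=
      fun s hs => Finset.sum_le_sum (fun u hu => hbound u (hs u hu))
    refine le_trans (hsum _ (fun u hu => (Finset.mem_sdiff.1 hu).2)) ?_
    -- split univ \ I into three parts
    have hsplit : Finset.univ \ I = (B \ B') ∪ (B' \ B) ∪ (Finset.univ \ (B ∪ B')) := by
      ext z
      simp only [hI, Finset.mem_sdiff, Finset.mem_union, Finset.mem_inter, Finset.mem_univ,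
        true_and]
      tauto
    rw [hsplit]
    have hd1 : Disjoint ((B \ B') ∪ (B' \ B)) (Finset.univ \ (B ∪ B')) := by
      rw [Finset.disjoint_left]
      intro z hz hz2
      simp only [Finset.mem_union, Finset.mem_sdiff, Finset.mem_univ, true_and] at hz hz2
      tauto
    have hd2 : Disjoint (B \ B') (B' \ B) := by
      rw [Finset.disjoint_left]
      intro z hz hz2
      simp only [Finset.mem_sdiff] at hz hz2
      tauto
    rw [Finset.sum_union hd1, Finset.sum_union hd2]
    have e1 : (∑ u ∈ B \ B', (if u ∈ B then 1 else if u ∈ B' then 1 else 4)) = (B \ B').card :=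
      (Finset.sum_congr rfl (fun u hu => by
        rw [if_pos (Finset.mem_sdiff.1 hu).1])).trans (by simp)
    have e2 : (∑ u ∈ B' \ B, (if u ∈ B then 1 else if u ∈ B' then 1 else 4)) = (B' \ B).card :=
      (Finset.sum_congr rfl (fun u hu => by
        rw [if_neg (Finset.mem_sdiff.1 hu).2, if_pos (Finset.mem_sdiff.1 hu).1])).trans (by simp)
    have e3 : (∑ u ∈ Finset.univ \ (B ∪ B'), (if u ∈ B then 1 else if u ∈ B' then 1 else 4)) =
        4 * (Finset.univ \ (B ∪ B')).card := by
      have hc : ∀ u ∈ Finset.univ \ (B ∪ B'),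
          (if u ∈ B then (1 : ℕ) else if u ∈ B' then 1 else 4) = 4 := by
        intro u hu
        have h := (Finset.mem_sdiff.1 hu).2
        rw [Finset.mem_union] at h
        push_neg at h
        rw [if_neg h.1, if_neg h.2]
      rw [Finset.sum_congr rfl hc, Finset.sum_const, smul_eq_mul, mul_comm]
    rw [e1, e2, e3]
  -- put everything together
  have hIcard : I.card = (I \ T).card + T.card :=
    (Finset.card_sdiff_add_card_eq_card hTI).symm
  have hBcard : (B \ B').card + I.card = B.card := by
    rw [hI, ← Finset.sdiff_inter_self_left B B']
    exact Finset.card_sdiff_add_card_eq_card Finset.inter_subset_left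
  have hB'card : (B' \ B).card + I.card = B'.card := by
    rw [hI, Finset.inter_comm, ← Finset.sdiff_inter_self_left B' B]
    exact Finset.card_sdiff_add_card_eq_card Finset.inter_subset_left
  have hncard : (Finset.univ \ (B ∪ B')).card + (B ∪ B').card = Fintype.card V := by
    rw [Finset.card_sdiff_add_card_eq_card (Finset.subset_univ _), Finset.card_univ]
  have huni : (B ∪ B').card + I.card = B.card + B'.card := by
    rw [hI]; exact Finset.card_union_add_card_inter B B'
  omega

end Key

/-- For any connected digraph `D` of order `n ≥ 3`,
`81 · L₂ᵗ(D) · L₂ᵗ(D⁻¹) ≤ 64n²`. -/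
theorem stmt14 {V : Type*} [Fintype V] [DecidableEq V] (A : V → V → Prop) [DecidableRel A]
    (hloopless : ∀ v : V, ¬ A v v) (hconn : (SimpleGraph.fromRel A).Connected)
    (n : ℕ) (hn : Fintype.card V = n) (h3 : 3 ≤ n) :
    81 * (total2LimitedPackingNumber A * total2LimitedPackingNumber (converse A))
      ≤ 64 * n ^ 2 := by
  classical
  have hcard : Fintype.card V = n := hn
  -- the empty set is a packing (for any arc relation)
  have hempty : ∀ (R : V → V → Prop) [DecidableRel R], IsTotal2LimitedPacking R (∅ : Finset V) := by
    intro R _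
    constructor
    · intro v hv; exact absurd hv (Finset.notMem_empty v)
    · intro v _; simp
  have hbdd : ∀ (R : V → V → Prop) [DecidableRel R],
      BddAbove {m | ∃ B : Finset V, IsTotal2LimitedPacking R B ∧ B.card = m} := by
    intro R _
    refine ⟨Fintype.card V, ?_⟩
    rintro m ⟨B, -, rfl⟩
    exact Finset.card_le_univ B
  have hne : ∀ (R : V → V → Prop) [DecidableRel R],
      {m | ∃ B : Finset V, IsTotal2LimitedPacking R B ∧ B.card = m}.Nonempty :=
    fun R _ => ⟨0, ∅, hempty R, Finset.card_empty⟩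
  obtain ⟨B, hBp, hBc⟩ := Nat.sSup_mem (hne A) (hbdd A)
  obtain ⟨B', hB'p, hB'c⟩ := Nat.sSup_mem (hne (converse A)) (hbdd (converse A))
  have h9 : 9 * (B.card + B'.card) ≤ 16 * n := by
    rw [← hcard]
    exact key_sum A hconn (by omega) hBp hB'p
  have hx : total2LimitedPackingNumber A = B.card := hBc.symm
  have hy : total2LimitedPackingNumber (converse A) = B'.card := hB'c.symm
  rw [hx, hy]
  have h4 : 4 * (B.card * B'.card) ≤ (B.card + B'.card) ^ 2 := by
    nlinarith [two_mul_le_add_sq B.card B'.card]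
  have h5 : (9 * (B.card + B'.card)) ^ 2 ≤ (16 * n) ^ 2 := Nat.pow_le_pow_left h9 2
  nlinarith [h4, h5]
end

section
/- Let D be a finite digraph with vertex set {v₁, …, vₙ}, and let D′ be the digraph obtained from D by adding, for each 1 ≤ i ≤ n, two new vertices wᵢ and uᵢ together with the arcs (wᵢ, uᵢ), (uᵢ, wᵢ) and (uᵢ, vᵢ). Then γ×₂(D′) = γ×₂ᵗ(D′) = 2n + γ(D). -/
open Finset

variable {V : Type*}

/-!
Each `wᵢ` has closed in-neighbourhood `{wᵢ, uᵢ}`, its only in-neighbour and only neighbour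
being `uᵢ`; hence every double dominating set and every total 2-dominating set of `D'` contains
all `2n` new vertices. Besides `uᵢ`, the vertex `vᵢ` needs a second dominator (resp. in-neighbour,
when `vᵢ` is not chosen), which must come from `D`, so the trace on `D` is a dominating set of
`D`. Conversely, all new vertices together with a minimum dominating set of `D` form both a
double and a total 2-dominating set of `D'`.
-/

open Sum

section Extremal

variable {α : Type*}

theorem sInf_setOf_card_eq {P : Finset α → Prop} {S : Finset α} {m : ℕ} (hS : P S)
    (hSm : #S = m) (hmin : ∀ T, P T → m ≤ #T) : sInf {k | ∃ T, P T ∧ #T = k} = m :=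
  le_antisymm (Nat.sInf_le ⟨S, hS, hSm⟩)
    (le_csInf ⟨_, S, hS, hSm⟩ (by rintro _ ⟨T, hT, rfl⟩; exact hmin T hT))

theorem Finset.eq_pair_of_subset_of_two_le_card [DecidableEq α] {s : Finset α} {a b : α}
    (hs : s ⊆ {a, b}) (h2 : 2 ≤ #s) : s = {a, b} :=
  eq_of_subset_of_card_le hs ((card_le_two).trans h2)

end Extremal

section Domination

variable [DecidableEq V] {A : V → V → Prop} [DecidableRel A]

theorem isTupleDominating_one_iff {T : Finset V} :
    IsTupleDominating A 1 T ↔ ∀ v, ∃ a ∈ T, a = v ∨ A a v := by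
  simp only [IsTupleDominating, Nat.one_le_iff_ne_zero, Nat.pos_iff_ne_zero.symm, card_pos,
    filter_nonempty_iff]

variable [Fintype V]

theorem tupleDominationNumber_le {r : ℕ} {S : Finset V} (hS : IsTupleDominating A r S) :
    tupleDominationNumber A r ≤ #S :=
  Nat.sInf_le ⟨S, hS, rfl⟩

theorem exists_isTupleDominating_one_card_eq :
    ∃ T, IsTupleDominating A 1 T ∧ #T = tupleDominationNumber A 1 :=
  Nat.sInf_mem (s := {m | ∃ T : Finset V, IsTupleDominating A 1 T ∧ #T = m})
    ⟨_, univ, fun v => card_pos.2 ⟨v, by simp⟩, rfl⟩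

end Domination

/-- `A'` is the digraph `D'` built from `D = (V, A)`, with `wᵢ = inr (inl i)` and
`uᵢ = inr (inr i)`. -/
def IsDigonCorona (A : V → V → Prop) (A' : V ⊕ (V ⊕ V) → V ⊕ (V ⊕ V) → Prop) : Prop :=
  ∀ x y : V ⊕ (V ⊕ V), A' x y ↔
    ((∃ a b : V, x = inl a ∧ y = inl b ∧ A a b) ∨
     (∃ i : V, x = inr (inl i) ∧ y = inr (inr i)) ∨
     (∃ i : V, x = inr (inr i) ∧ y = inr (inl i)) ∨
     (∃ i : V, x = inr (inr i) ∧ y = inl i))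

namespace IsDigonCorona

variable {A : V → V → Prop} {A' : V ⊕ (V ⊕ V) → V ⊕ (V ⊕ V) → Prop}

theorem arc_to_inl (h : IsDigonCorona A A') (x : V ⊕ (V ⊕ V)) (i : V) :
    A' x (inl i) ↔ (∃ a, x = inl a ∧ A a i) ∨ x = inr (inr i) := by
  rw [h]
  simp

theorem arc_to_w (h : IsDigonCorona A A') (x : V ⊕ (V ⊕ V)) (i : V) :
    A' x (inr (inl i)) ↔ x = inr (inr i) := by
  rw [h]
  simp

theorem arc_to_u (h : IsDigonCorona A A') (x : V ⊕ (V ⊕ V)) (i : V) :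
    A' x (inr (inr i)) ↔ x = inr (inl i) := by
  rw [h]
  simp

theorem arc_from_w (h : IsDigonCorona A A') (x : V ⊕ (V ⊕ V)) (i : V) :
    A' (inr (inl i)) x ↔ x = inr (inr i) := by
  rw [h]
  simp

theorem arc_w_u (h : IsDigonCorona A A') (i : V) : A' (inr (inl i)) (inr (inr i)) :=
  (h.arc_to_u _ i).2 rfl

theorem arc_u_w (h : IsDigonCorona A A') (i : V) : A' (inr (inr i)) (inr (inl i)) :=
  (h.arc_to_w _ i).2 rfl

theorem arc_u_inl (h : IsDigonCorona A A') (i : V) : A' (inr (inr i)) (inl i) :=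
  (h.arc_to_inl _ i).2 (Or.inr rfl)

theorem arc_inl (h : IsDigonCorona A A') {a b : V} (hab : A a b) : A' (inl a) (inl b) :=
  (h.arc_to_inl _ b).2 (Or.inl ⟨a, rfl, hab⟩)

theorem exists_dominator_toLeft (h : IsDigonCorona A A') {S : Finset (V ⊕ (V ⊕ V))} {i : V}
    {x : V ⊕ (V ⊕ V)} (hxS : x ∈ S) (hxu : x ≠ inr (inr i)) (hx : x = inl i ∨ A' x (inl i)) :
    ∃ a ∈ S.toLeft, a = i ∨ A a i := by
  rcases hx with rfl | hx
  · exact ⟨i, by simpa using hxS, Or.inl rfl⟩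
  · obtain ⟨a, rfl, hai⟩ := ((h.arc_to_inl x i).1 hx).resolve_right hxu
    exact ⟨a, by simpa using hxS, Or.inr hai⟩

variable [Fintype V] [DecidableEq V] [DecidableRel A] [DecidableRel A']

theorem isTupleDominating_two_disjSum (h : IsDigonCorona A A') {T : Finset V}
    (hT : IsTupleDominating A 1 T) : IsTupleDominating A' 2 (T.disjSum univ) := by
  rintro (i | i | i)
  · obtain ⟨a, haT, hai⟩ := isTupleDominating_one_iff.1 hT i
    refine one_lt_card.2 ⟨inr (inr i), by simp [h.arc_u_inl], inl a, ?_, inr_ne_inl⟩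
    rcases hai with rfl | hai
    · simp [haT]
    · simp [haT, h.arc_inl hai]
  · exact one_lt_card.2 ⟨inr (inl i), by simp, inr (inr i), by simp [h.arc_u_w], by simp⟩
  · exact one_lt_card.2 ⟨inr (inl i), by simp [h.arc_w_u], inr (inr i), by simp, by simp⟩

theorem isTotal2Dominating_disjSum (h : IsDigonCorona A A') {T : Finset V}
    (hT : IsTupleDominating A 1 T) : IsTotal2Dominating A' (T.disjSum univ) := by
  refine ⟨?_, ?_⟩
  · rintro (i | i | i) -
    · exact ⟨inr (inr i), by simp, inr_ne_inl, Or.inl (h.arc_u_inl i)⟩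
    · exact ⟨inr (inr i), by simp, by simp, Or.inl (h.arc_u_w i)⟩
    · exact ⟨inr (inl i), by simp, by simp, Or.inl (h.arc_w_u i)⟩
  · rintro (i | j) hi
    · obtain ⟨a, haT, rfl | hai⟩ := isTupleDominating_one_iff.1 hT i
      · simp [haT] at hi
      · exact one_lt_card.2
          ⟨inr (inr i), by simp [h.arc_u_inl], inl a, by simp [haT, h.arc_inl hai], inr_ne_inl⟩
    · simp at hi

theorem two_mul_card_add_le_card {S : Finset (V ⊕ (V ⊕ V))}
    (hw : ∀ i, inr (inl i) ∈ S) (hu : ∀ i, inr (inr i) ∈ S)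
    (hL : IsTupleDominating A 1 S.toLeft) :
    2 * Fintype.card V + tupleDominationNumber A 1 ≤ #S := by
  have hR : S.toRight = univ := eq_univ_of_forall (by rintro (i | i) <;> simp [hw, hu])
  rw [← card_toLeft_add_card_toRight, hR, card_univ, Fintype.card_sum]
  have := tupleDominationNumber_le hL
  omega

theorem le_card_of_isTupleDominating_two (h : IsDigonCorona A A') {S : Finset (V ⊕ (V ⊕ V))}
    (hS : IsTupleDominating A' 2 S) : 2 * Fintype.card V + tupleDominationNumber A 1 ≤ #S := by
  have hwu (i : V) : S.filter (fun x => x = inr (inl i) ∨ A' x (inr (inl i))) =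
      {inr (inl i), inr (inr i)} :=
    eq_pair_of_subset_of_two_le_card (fun x hx => by simp_all [h.arc_to_w]) (hS _)
  refine two_mul_card_add_le_card (fun i => ?_) (fun i => ?_) ?_
  · exact (mem_filter.1 ((hwu i).symm ▸ mem_insert_self _ _)).1
  · exact (mem_filter.1 ((hwu i).symm ▸ mem_insert_of_mem (mem_singleton_self _))).1
  refine isTupleDominating_one_iff.2 fun i => ?_
  obtain ⟨x, hx, hxu⟩ := exists_mem_ne (hS (inl i)) (inr (inr i))
  rw [mem_filter] at hx
  exact h.exists_dominator_toLeft hx.1 hxu hx.2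

theorem le_card_of_isTotal2Dominating (h : IsDigonCorona A A') {S : Finset (V ⊕ (V ⊕ V))}
    (hS : IsTotal2Dominating A' S) : 2 * Fintype.card V + tupleDominationNumber A 1 ≤ #S := by
  have hw (i : V) : inr (inl i) ∈ S := by
    by_contra hw
    have hsub : S.filter (A' · (inr (inl i))) ⊆ {inr (inr i)} := fun x hx => by
      simp_all [h.arc_to_w]
    have := (hS.2 _ hw).trans (card_le_card hsub)
    simp at this
  have hu (i : V) : inr (inr i) ∈ S := by
    obtain ⟨x, hxS, -, hx⟩ := hS.1 _ (hw i)
    obtain rfl : x = inr (inr i) := hx.elim (h.arc_to_w x i).1 (h.arc_from_w x i).1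
    exact hxS
  refine two_mul_card_add_le_card hw hu (isTupleDominating_one_iff.2 fun i => ?_)
  by_cases hi : inl i ∈ S
  · exact h.exists_dominator_toLeft hi inl_ne_inr (Or.inl rfl)
  · obtain ⟨x, hx, hxu⟩ := exists_mem_ne (hS.2 _ hi) (inr (inr i))
    rw [mem_filter] at hx
    exact h.exists_dominator_toLeft hx.1 hxu (Or.inr hx.2)

end IsDigonCorona

theorem stmt18_general {V : Type*} [Fintype V] [DecidableEq V] (A : V → V → Prop) [DecidableRel A]
    (n : ℕ) (hn : Fintype.card V = n)
    (A' : (V ⊕ (V ⊕ V)) → (V ⊕ (V ⊕ V)) → Prop) [DecidableRel A']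
    (hA' : ∀ x y : V ⊕ (V ⊕ V), A' x y ↔
      ((∃ a b : V, x = Sum.inl a ∧ y = Sum.inl b ∧ A a b) ∨
       (∃ i : V, x = Sum.inr (Sum.inl i) ∧ y = Sum.inr (Sum.inr i)) ∨
       (∃ i : V, x = Sum.inr (Sum.inr i) ∧ y = Sum.inr (Sum.inl i)) ∨
       (∃ i : V, x = Sum.inr (Sum.inr i) ∧ y = Sum.inl i))) :
    tupleDominationNumber A' 2 = 2 * n + tupleDominationNumber A 1 ∧
    total2DominationNumber A' = 2 * n + tupleDominationNumber A 1 := by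
  have hD' : IsDigonCorona A A' := hA'
  subst hn
  obtain ⟨T, hT, hTcard⟩ := exists_isTupleDominating_one_card_eq (A := A)
  have hcard : #(T.disjSum (univ : Finset (V ⊕ V))) =
      2 * Fintype.card V + tupleDominationNumber A 1 := by
    rw [card_disjSum, card_univ, Fintype.card_sum, hTcard]
    ring
  exact ⟨sInf_setOf_card_eq (hD'.isTupleDominating_two_disjSum hT) hcard
      fun _ => hD'.le_card_of_isTupleDominating_two,
    sInf_setOf_card_eq (hD'.isTotal2Dominating_disjSum hT) hcard
      fun _ => hD'.le_card_of_isTotal2Dominating⟩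

/-- Let `D'` be obtained from `D` by adding, for each vertex `i` of `D`,
new vertices `wᵢ = Sum.inr (Sum.inl i)` and `uᵢ = Sum.inr (Sum.inr i)` and arcs
`(wᵢ, uᵢ)`, `(uᵢ, wᵢ)` and `(uᵢ, vᵢ)`. Then `γ×₂(D') = γ×₂ᵗ(D') = 2n + γ(D)`. -/
theorem stmt18 {V : Type*} [Fintype V] [DecidableEq V] (A : V → V → Prop) [DecidableRel A]
    (hloopless : ∀ v : V, ¬ A v v) (n : ℕ) (hn : Fintype.card V = n)
    (A' : (V ⊕ (V ⊕ V)) → (V ⊕ (V ⊕ V)) → Prop) [DecidableRel A']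
    (hA' : ∀ x y : V ⊕ (V ⊕ V), A' x y ↔
      ((∃ a b : V, x = Sum.inl a ∧ y = Sum.inl b ∧ A a b) ∨
       (∃ i : V, x = Sum.inr (Sum.inl i) ∧ y = Sum.inr (Sum.inr i)) ∨
       (∃ i : V, x = Sum.inr (Sum.inr i) ∧ y = Sum.inr (Sum.inl i)) ∨
       (∃ i : V, x = Sum.inr (Sum.inr i) ∧ y = Sum.inl i))) :
    tupleDominationNumber A' 2 = 2 * n + tupleDominationNumber A 1 ∧
    total2DominationNumber A' = 2 * n + tupleDominationNumber A 1 :=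
  stmt18_general A n hn A' hA'
end

section
/- Let D be a finite digraph with vertex set {v₁, …, vₙ}, and let D″ be the digraph obtained from D by adding, for each 1 ≤ i ≤ n, a new vertex xᵢ together with the arc (vᵢ, xᵢ). Then L₂(D″) = L₂ᵗ(D″) = n + ρ(D). -/
open Finset

variable {V : Type*}

section Aux

variable {V : Type*}

lemma lp_empty [Fintype V] [DecidableEq V] (A : V → V → Prop) [DecidableRel A] (k : ℕ) :
    IsLimitedPacking A k (∅ : Finset V) := by
  intro v; simp

lemma lp_bdd [Fintype V] [DecidableEq V] (A : V → V → Prop) [DecidableRel A] (k : ℕ) :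
    BddAbove {m | ∃ B : Finset V, IsLimitedPacking A k B ∧ B.card = m} := by
  refine ⟨Fintype.card V, ?_⟩
  rintro m ⟨B, -, rfl⟩
  exact Finset.card_le_univ B

lemma lp_ne [Fintype V] [DecidableEq V] (A : V → V → Prop) [DecidableRel A] (k : ℕ) :
    {m | ∃ B : Finset V, IsLimitedPacking A k B ∧ B.card = m}.Nonempty :=
  ⟨0, ∅, lp_empty A k, rfl⟩

lemma lp_exists [Fintype V] [DecidableEq V] (A : V → V → Prop) [DecidableRel A] (k : ℕ) :
    ∃ B : Finset V, IsLimitedPacking A k B ∧ B.card = limitedPackingNumber A k :=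
  Nat.sSup_mem (lp_ne A k) (lp_bdd A k)

lemma lp_le [Fintype V] [DecidableEq V] (A : V → V → Prop) [DecidableRel A] (k : ℕ)
    (B : Finset V) (hB : IsLimitedPacking A k B) : B.card ≤ limitedPackingNumber A k :=
  le_csSup (lp_bdd A k) ⟨B, hB, rfl⟩

lemma lp_sSup_le [Fintype V] [DecidableEq V] (A : V → V → Prop) [DecidableRel A] (k m : ℕ)
    (h : ∀ B : Finset V, IsLimitedPacking A k B → B.card ≤ m) :
    limitedPackingNumber A k ≤ m := by
  apply csSup_le (lp_ne A k)
  rintro x ⟨B, hB, rfl⟩; exact h B hB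

lemma tlp_empty [Fintype V] [DecidableEq V] (A : V → V → Prop) [DecidableRel A] :
    IsTotal2LimitedPacking A (∅ : Finset V) := by
  constructor
  · intro v hv; simp at hv
  · intro v _; simp

lemma tlp_le [Fintype V] [DecidableEq V] (A : V → V → Prop) [DecidableRel A]
    (B : Finset V) (hB : IsTotal2LimitedPacking A B) :
    B.card ≤ total2LimitedPackingNumber A := by
  refine le_csSup ⟨Fintype.card V, ?_⟩ ⟨B, hB, rfl⟩
  rintro m ⟨C, -, rfl⟩
  exact Finset.card_le_univ C

lemma tlp_sSup_le [Fintype V] [DecidableEq V] (A : V → V → Prop) [DecidableRel A] (m : ℕ)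
    (h : ∀ B : Finset V, IsTotal2LimitedPacking A B → B.card ≤ m) :
    total2LimitedPackingNumber A ≤ m := by
  have hne : {m | ∃ B : Finset V, IsTotal2LimitedPacking A B ∧ B.card = m}.Nonempty :=
    ⟨0, ∅, tlp_empty A, rfl⟩
  apply csSup_le hne
  rintro x ⟨B, hB, rfl⟩; exact h B hB

lemma total_to_limited [Fintype V] [DecidableEq V] (A : V → V → Prop) [DecidableRel A]
    (B : Finset V) (h : IsTotal2LimitedPacking A B) : IsLimitedPacking A 2 B := by
  intro v
  by_cases hv : v ∈ B
  · calc (B.filter fun u => u = v ∨ A v u).card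
        ≤ (insert v (B.filter fun u => u ≠ v ∧ (A u v ∨ A v u))).card := by
          apply Finset.card_le_card
          intro u hu
          simp only [Finset.mem_filter, Finset.mem_insert] at hu ⊢
          rcases hu with ⟨huB, rfl | hA⟩
          · exact Or.inl rfl
          · by_cases huv : u = v
            · exact Or.inl huv
            · exact Or.inr ⟨huB, huv, Or.inr hA⟩
      _ ≤ (B.filter fun u => u ≠ v ∧ (A u v ∨ A v u)).card + 1 := Finset.card_insert_le _ _
      _ ≤ 2 := by have := h.1 v hv; omega
  · calc (B.filter fun u => u = v ∨ A v u).card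
        ≤ (B.filter fun u => A v u).card := by
          apply Finset.card_le_card
          intro u hu
          simp only [Finset.mem_filter] at hu ⊢
          rcases hu with ⟨huB, rfl | hA⟩
          · exact absurd huB hv
          · exact ⟨huB, hA⟩
      _ ≤ 2 := h.2 v hv

/-- Exchange: any 2-limited packing of `D''` can be enlarged to one containing all pendant
vertices. -/
lemma exchange_lemma [Fintype V] [DecidableEq V]
    (A'' : (V ⊕ V) → (V ⊕ V) → Prop) [DecidableRel A'']
    (hr : ∀ a : V, ∀ u : V ⊕ V, ¬ A'' (Sum.inr a) u)
    (hpen : ∀ (x : V ⊕ V) (i : V), A'' x (Sum.inr i) → x = Sum.inl i)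
    (B : Finset (V ⊕ V)) (hB : IsLimitedPacking A'' 2 B) :
    ∃ B' : Finset (V ⊕ V), IsLimitedPacking A'' 2 B' ∧ B.card ≤ B'.card ∧
      ∀ i : V, Sum.inr i ∈ B' := by
  suffices H : ∀ k : ℕ, ∀ B : Finset (V ⊕ V), IsLimitedPacking A'' 2 B →
      (Finset.univ.filter fun i : V => Sum.inr i ∉ B).card = k →
      ∃ B' : Finset (V ⊕ V), IsLimitedPacking A'' 2 B' ∧ B.card ≤ B'.card ∧
        ∀ i : V, Sum.inr i ∈ B' by
    exact H _ B hB rfl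
  intro k
  induction k using Nat.strong_induction_on with
  | _ k ih =>
    intro B hB hk
    by_cases hall : ∀ i : V, Sum.inr i ∈ B
    · exact ⟨B, hB, le_rfl, hall⟩
    push_neg at hall
    obtain ⟨i, hi⟩ := hall
    obtain ⟨B₁, hsub, hcard1, hfilt, hkeep⟩ :
        ∃ B₁ : Finset (V ⊕ V), B₁ ⊆ B ∧
          B.card ≤ B₁.card + 1 ∧
          (B₁.filter fun u => u = Sum.inl i ∨ A'' (Sum.inl i) u).card ≤ 1 ∧
          ∀ j : V, Sum.inr j ∈ B → Sum.inr j ∈ B₁ := by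
      by_cases h1 : (B.filter fun u => u = Sum.inl i ∨ A'' (Sum.inl i) u).card ≤ 1
      · exact ⟨B, Finset.Subset.refl B, Nat.le_succ _, h1, fun j h => h⟩
      · have h2 : (B.filter fun u => u = Sum.inl i ∨ A'' (Sum.inl i) u).Nonempty := by
          rw [← Finset.card_pos]; omega
        obtain ⟨w, hw⟩ := h2
        have hwB : w ∈ B := (Finset.mem_filter.mp hw).1
        refine ⟨B.erase w, Finset.erase_subset _ _, ?_, ?_, ?_⟩
        · rw [Finset.card_erase_of_mem hwB]
          have : 1 ≤ B.card := Finset.card_pos.mpr ⟨w, hwB⟩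
          omega
        · rw [Finset.filter_erase, Finset.card_erase_of_mem hw]
          have := hB (Sum.inl i)
          omega
        · intro j hj
          refine Finset.mem_erase.mpr ⟨?_, hj⟩
          rintro rfl
          rcases (Finset.mem_filter.mp hw).2 with h | h
          · exact nomatch h
          · have := hpen _ _ h
            have hij : i = j := Sum.inl_injective this
            exact hi (hij ▸ hj)
    have hni : Sum.inr i ∉ B₁ := fun h => hi (hsub h)
    set B' := insert (Sum.inr i) B₁ with hB'def
    have hB' : IsLimitedPacking A'' 2 B' := by
      intro v
      rw [hB'def, Finset.filter_insert]
      split_ifs with hcond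
      · have hv : v = Sum.inr i ∨ v = Sum.inl i := by
          rcases hcond with h | h
          · exact Or.inl h.symm
          · exact Or.inr (hpen v i h)
        rcases hv with rfl | rfl
        · have hemp : (B₁.filter fun u => u = Sum.inr i ∨ A'' (Sum.inr i) u) = ∅ := by
            apply Finset.filter_eq_empty_iff.mpr
            intro u hu
            push_neg
            constructor
            · rintro rfl; exact hni hu
            · exact hr i u
          rw [hemp]
          simp
        · calc (insert (Sum.inr i)
              (B₁.filter fun u => u = Sum.inl i ∨ A'' (Sum.inl i) u)).card
              ≤ (B₁.filter fun u => u = Sum.inl i ∨ A'' (Sum.inl i) u).card + 1 :=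
                Finset.card_insert_le _ _
            _ ≤ 2 := by omega
      · exact le_trans (Finset.card_le_card (Finset.filter_subset_filter _ hsub)) (hB v)
    have hcard' : B.card ≤ B'.card := by
      rw [hB'def, Finset.card_insert_of_notMem hni]
      omega
    have hmiss : (Finset.univ.filter fun j : V => Sum.inr j ∉ B').card < k := by
      have hik : i ∈ Finset.univ.filter fun j : V => Sum.inr j ∉ B := by
        simp [hi]
      have hsubm : (Finset.univ.filter fun j : V => Sum.inr j ∉ B')
          ⊆ (Finset.univ.filter fun j : V => Sum.inr j ∉ B).erase i := by
        intro j hj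
        simp only [Finset.mem_filter, Finset.mem_erase, Finset.mem_univ, true_and] at hj ⊢
        constructor
        · rintro rfl; exact hj (Finset.mem_insert_self _ _)
        · intro hjB; exact hj (Finset.mem_insert_of_mem (hkeep j hjB))
      have h1 := Finset.card_le_card hsubm
      rw [Finset.card_erase_of_mem hik, hk] at h1
      have : 1 ≤ k := by
        rw [← hk]
        exact Finset.card_pos.mpr ⟨i, hik⟩
      omega
    obtain ⟨B'', h1, h2, h3⟩ := ih _ hmiss B' hB' rfl
    exact ⟨B'', h1, le_trans hcard' h2, h3⟩

end Aux

section Aux2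

variable {V : Type*}

/-- Upper bound: a 2-limited packing of `D''` containing all pendant vertices has
cardinality at most `n + ρ(D)`. -/
lemma full_bound [Fintype V] [DecidableEq V] (A : V → V → Prop) [DecidableRel A]
    (A'' : (V ⊕ V) → (V ⊕ V) → Prop) [DecidableRel A'']
    (hll : ∀ a b : V, A'' (Sum.inl a) (Sum.inl b) ↔ A a b)
    (hlr : ∀ a : V, A'' (Sum.inl a) (Sum.inr a))
    (B : Finset (V ⊕ V)) (hB : IsLimitedPacking A'' 2 B)
    (hall : ∀ i : V, Sum.inr i ∈ B) :
    B.card ≤ Fintype.card V + limitedPackingNumber A 1 := by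
  set P : Finset V := Finset.univ.filter fun v => Sum.inl v ∈ B with hPdef
  have hPpack : IsLimitedPacking A 1 P := by
    intro v
    have key : insert (Sum.inr v : V ⊕ V) ((P.filter fun u => u = v ∨ A v u).image (Sum.inl : V → V ⊕ V))
        ⊆ B.filter fun u => u = Sum.inl v ∨ A'' (Sum.inl v) u := by
      intro x hx
      rcases Finset.mem_insert.mp hx with rfl | hx
      · exact Finset.mem_filter.mpr ⟨hall v, Or.inr (hlr v)⟩
      · obtain ⟨u, hu, rfl⟩ := Finset.mem_image.mp hx
        rcases Finset.mem_filter.mp hu with ⟨huP, hcond⟩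
        have huB : Sum.inl u ∈ B := (Finset.mem_filter.mp huP).2
        refine Finset.mem_filter.mpr ⟨huB, ?_⟩
        rcases hcond with rfl | hA
        · exact Or.inl rfl
        · exact Or.inr ((hll v u).mpr hA)
    have h1 : (insert (Sum.inr v : V ⊕ V) ((P.filter fun u => u = v ∨ A v u).image (Sum.inl : V → V ⊕ V))).card
        = (P.filter fun u => u = v ∨ A v u).card + 1 := by
      rw [Finset.card_insert_of_notMem, Finset.card_image_of_injective _ Sum.inl_injective]
      intro h
      obtain ⟨u, -, h⟩ := Finset.mem_image.mp h
      exact nomatch h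
    have h2 := Finset.card_le_card key
    have h3 := hB (Sum.inl v)
    omega
  have hdisj : Disjoint (P.image Sum.inl) (Finset.univ.image Sum.inr : Finset (V ⊕ V)) := by
    rw [Finset.disjoint_left]
    rintro x hx hx'
    obtain ⟨a, -, rfl⟩ := Finset.mem_image.mp hx
    obtain ⟨b, -, h⟩ := Finset.mem_image.mp hx'
    exact nomatch h
  have hBeq : B = P.image Sum.inl ∪ Finset.univ.image Sum.inr := by
    ext x
    cases x with
    | inl v =>
      constructor
      · intro h
        apply Finset.mem_union_left
        exact Finset.mem_image.mpr ⟨v, by simp [hPdef, h], rfl⟩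
      · intro h
        rcases Finset.mem_union.mp h with h | h
        · obtain ⟨a, ha, hea⟩ := Finset.mem_image.mp h
          obtain rfl : a = v := Sum.inl_injective hea
          exact (Finset.mem_filter.mp ha).2
        · obtain ⟨a, -, hea⟩ := Finset.mem_image.mp h
          exact nomatch hea
    | inr v =>
      simp only [Finset.mem_union, Finset.mem_image]
      constructor
      · intro _; exact Or.inr ⟨v, Finset.mem_univ v, rfl⟩
      · intro _; exact hall v
  have hcard : B.card = P.card + Fintype.card V := by
    rw [hBeq, Finset.card_union_of_disjoint hdisj,
      Finset.card_image_of_injective _ Sum.inl_injective,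
      Finset.card_image_of_injective _ Sum.inr_injective, Finset.card_univ]
  have := lp_le A 1 P hPpack
  omega

end Aux2

section Aux3

variable {V : Type*}

lemma construction [Fintype V] [DecidableEq V] (A : V → V → Prop) [DecidableRel A]
    (A'' : (V ⊕ V) → (V ⊕ V) → Prop) [DecidableRel A'']
    (hll : ∀ a b : V, A'' (Sum.inl a) (Sum.inl b) ↔ A a b)
    (hlr : ∀ a : V, A'' (Sum.inl a) (Sum.inr a))
    (hlr' : ∀ a b : V, A'' (Sum.inl a) (Sum.inr b) → a = b)
    (hr : ∀ a : V, ∀ u : V ⊕ V, ¬ A'' (Sum.inr a) u)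
    (P₀ : Finset V) (hP₀ : IsLimitedPacking A 1 P₀) :
    ∃ B₀ : Finset (V ⊕ V), IsLimitedPacking A'' 2 B₀ ∧ IsTotal2LimitedPacking A'' B₀ ∧
      B₀.card = P₀.card + Fintype.card V := by
  set B₀ : Finset (V ⊕ V) := P₀.image Sum.inl ∪ Finset.univ.image Sum.inr with hB₀def
  have hmem : ∀ x : V ⊕ V, x ∈ B₀ ↔ (∃ p ∈ P₀, x = Sum.inl p) ∨ (∃ q : V, x = Sum.inr q) := by
    intro x
    rw [hB₀def]
    simp only [Finset.mem_union, Finset.mem_image, Finset.mem_univ, true_and]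
    constructor
    · rintro (⟨p, hp, rfl⟩ | ⟨q, -, rfl⟩)
      · exact Or.inl ⟨p, hp, rfl⟩
      · exact Or.inr ⟨_, rfl⟩
    · rintro (⟨p, hp, rfl⟩ | ⟨q, rfl⟩)
      · exact Or.inl ⟨p, hp, rfl⟩
      · exact Or.inr ⟨q, rfl⟩
  have hinr : ∀ q : V, Sum.inr q ∈ B₀ := fun q => (hmem _).mpr (Or.inr ⟨q, rfl⟩)
  -- the key ≤ 2 bound at vertices `inl w`
  have hkey : ∀ w : V, ∀ p : Sum V V → Prop, ∀ inst : DecidablePred p,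
      (∀ x : V ⊕ V, x ∈ B₀ → p x → (∃ q ∈ P₀, x = Sum.inl q ∧ (q = w ∨ A w q)) ∨ x = Sum.inr w) →
      (B₀.filter p).card ≤ 2 := by
    intro w p inst hp
    have hsub : B₀.filter p ⊆
        insert (Sum.inr w : V ⊕ V) ((P₀.filter fun q => q = w ∨ A w q).image
          (Sum.inl : V → V ⊕ V)) := by
      intro x hx
      rcases Finset.mem_filter.mp hx with ⟨hxB, hxp⟩
      rcases hp x hxB hxp with ⟨q, hq, rfl, hcond⟩ | rfl
      · exact Finset.mem_insert.mpr (Or.inr (Finset.mem_image.mpr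
          ⟨q, Finset.mem_filter.mpr ⟨hq, hcond⟩, rfl⟩))
      · exact Finset.mem_insert_self _ _
    calc (B₀.filter p).card ≤ _ := Finset.card_le_card hsub
      _ ≤ ((P₀.filter fun q => q = w ∨ A w q).image (Sum.inl : V → V ⊕ V)).card + 1 :=
        Finset.card_insert_le _ _
      _ ≤ 2 := by
        rw [Finset.card_image_of_injective _ Sum.inl_injective]
        have := hP₀ w
        omega
  have hlp : IsLimitedPacking A'' 2 B₀ := by
    intro v
    cases v with
    | inl w =>
      refine hkey w _ _ ?_
      intro x hxB hxp
      rcases (hmem x).mp hxB with ⟨q, hq, rfl⟩ | ⟨q, rfl⟩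
      · refine Or.inl ⟨q, hq, rfl, ?_⟩
        rcases hxp with h | h
        · exact Or.inl (Sum.inl_injective h)
        · exact Or.inr ((hll w q).mp h)
      · rcases hxp with h | h
        · exact nomatch h
        · exact Or.inr (by rw [hlr' w q h])
    | inr w =>
      have hsub : (B₀.filter fun u => u = Sum.inr w ∨ A'' (Sum.inr w) u)
          ⊆ {Sum.inr w} := by
        intro x hx
        rcases (Finset.mem_filter.mp hx).2 with rfl | h
        · exact Finset.mem_singleton_self _
        · exact absurd h (hr w x)
      exact le_trans (Finset.card_le_card hsub) (by simp)
  have htlp : IsTotal2LimitedPacking A'' B₀ := by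
    constructor
    · intro v hv
      cases v with
      | inl p =>
        have hpP : p ∈ P₀ := by
          rcases (hmem _).mp hv with ⟨q, hq, hqe⟩ | ⟨q, hqe⟩
          · obtain rfl : q = p := Sum.inl_injective hqe.symm
            exact hq
          · exact nomatch hqe
        have hsub : (B₀.filter fun u => u ≠ Sum.inl p ∧
            (A'' u (Sum.inl p) ∨ A'' (Sum.inl p) u)) ⊆ {Sum.inr p} := by
          intro x hx
          rcases Finset.mem_filter.mp hx with ⟨hxB, hne, hadj⟩
          rcases (hmem x).mp hxB with ⟨q, hq, rfl⟩ | ⟨q, rfl⟩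
          · exfalso
            have hqp : q ≠ p := fun h => hne (by rw [h])
            rcases hadj with h | h
            · -- A q p : contradiction with packing at q
              have hA : A q p := (hll q p).mp h
              have hsub2 : ({q, p} : Finset V) ⊆ P₀.filter fun u => u = q ∨ A q u := by
                intro y hy
                rcases Finset.mem_insert.mp hy with rfl | hy
                · exact Finset.mem_filter.mpr ⟨hq, Or.inl rfl⟩
                · rw [Finset.mem_singleton.mp hy]
                  exact Finset.mem_filter.mpr ⟨hpP, Or.inr hA⟩
              have hc : ({q, p} : Finset V).card = 2 := Finset.card_pair hqp
              have := Finset.card_le_card hsub2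
              have := hP₀ q
              omega
            · -- A p q : contradiction with packing at p
              have hA : A p q := (hll p q).mp h
              have hsub2 : ({p, q} : Finset V) ⊆ P₀.filter fun u => u = p ∨ A p u := by
                intro y hy
                rcases Finset.mem_insert.mp hy with rfl | hy
                · exact Finset.mem_filter.mpr ⟨hpP, Or.inl rfl⟩
                · rw [Finset.mem_singleton.mp hy]
                  exact Finset.mem_filter.mpr ⟨hq, Or.inr hA⟩
              have hc : ({p, q} : Finset V).card = 2 := Finset.card_pair (Ne.symm hqp)
              have := Finset.card_le_card hsub2
              have := hP₀ p
              omega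
          · rcases hadj with h | h
            · exact absurd h (hr q _)
            · rw [hlr' p q h]
              exact Finset.mem_singleton_self _
        exact le_trans (Finset.card_le_card hsub) (by simp)
      | inr w =>
        have hsub : (B₀.filter fun u => u ≠ Sum.inr w ∧
            (A'' u (Sum.inr w) ∨ A'' (Sum.inr w) u)) ⊆ {Sum.inl w} := by
          intro x hx
          rcases Finset.mem_filter.mp hx with ⟨hxB, hne, hadj⟩
          rcases hadj with h | h
          · cases x with
            | inl a =>
              rw [hlr' a w h]
              exact Finset.mem_singleton_self _
            | inr a => exact absurd h (hr a _)
          · exact absurd h (hr w x)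
        exact le_trans (Finset.card_le_card hsub) (by simp)
    · intro v hv
      cases v with
      | inl w =>
        refine hkey w _ _ ?_
        intro x hxB hxp
        rcases (hmem x).mp hxB with ⟨q, hq, rfl⟩ | ⟨q, rfl⟩
        · exact Or.inl ⟨q, hq, rfl, Or.inr ((hll w q).mp hxp)⟩
        · exact Or.inr (by rw [hlr' w q hxp])
      | inr w => exact absurd (hinr w) hv
  have hdisj : Disjoint (P₀.image Sum.inl) (Finset.univ.image Sum.inr : Finset (V ⊕ V)) := by
    rw [Finset.disjoint_left]
    rintro x hx hx'
    obtain ⟨a, -, rfl⟩ := Finset.mem_image.mp hx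
    obtain ⟨b, -, h⟩ := Finset.mem_image.mp hx'
    exact nomatch h
  refine ⟨B₀, hlp, htlp, ?_⟩
  rw [hB₀def, Finset.card_union_of_disjoint hdisj,
    Finset.card_image_of_injective _ Sum.inl_injective,
    Finset.card_image_of_injective _ Sum.inr_injective, Finset.card_univ]

end Aux3

/-- Let `D''` be obtained from `D` by adding, for each vertex `i` of `D`,
a new vertex `xᵢ = Sum.inr i` and the arc `(vᵢ, xᵢ)`. Then
`L₂(D'') = L₂ᵗ(D'') = n + ρ(D)`. -/
theorem stmt19 {V : Type*} [Fintype V] [DecidableEq V] (A : V → V → Prop) [DecidableRel A]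
    (hloopless : ∀ v : V, ¬ A v v) (n : ℕ) (hn : Fintype.card V = n)
    (A'' : (V ⊕ V) → (V ⊕ V) → Prop) [DecidableRel A'']
    (hA'' : ∀ x y : V ⊕ V, A'' x y ↔
      ((∃ a b : V, x = Sum.inl a ∧ y = Sum.inl b ∧ A a b) ∨
       (∃ i : V, x = Sum.inl i ∧ y = Sum.inr i))) :
    limitedPackingNumber A'' 2 = n + limitedPackingNumber A 1 ∧
    total2LimitedPackingNumber A'' = n + limitedPackingNumber A 1 := by
  subst hn
  have hll : ∀ a b : V, A'' (Sum.inl a) (Sum.inl b) ↔ A a b := by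
    intro a b; rw [hA'']; simp
  have hlr : ∀ a : V, A'' (Sum.inl a) (Sum.inr a) := by
    intro a; rw [hA'']; simp
  have hlr' : ∀ a b : V, A'' (Sum.inl a) (Sum.inr b) → a = b := by
    intro a b h; rw [hA''] at h
    rcases h with ⟨x, y, -, hy, -⟩ | ⟨i, hx, hy⟩
    · exact nomatch hy
    · obtain rfl : a = i := Sum.inl_injective hx
      exact (Sum.inr_injective hy).symm
  have hr : ∀ a : V, ∀ u : V ⊕ V, ¬ A'' (Sum.inr a) u := by
    intro a u h; rw [hA''] at h
    rcases h with ⟨x, y, hx, -, -⟩ | ⟨i, hx, -⟩ <;> exact nomatch hx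
  have hpen : ∀ (x : V ⊕ V) (i : V), A'' x (Sum.inr i) → x = Sum.inl i := by
    intro x i h; rw [hA''] at h
    rcases h with ⟨a, b, -, hy, -⟩ | ⟨j, hx, hy⟩
    · exact nomatch hy
    · obtain rfl : j = i := Sum.inr_injective hy.symm
      exact hx
  obtain ⟨P₀, hP₀, hP₀card⟩ := lp_exists A 1
  obtain ⟨B₀, hlp₀, htlp₀, hcard₀⟩ := construction A A'' hll hlr hlr' hr P₀ hP₀
  have hub : ∀ B : Finset (V ⊕ V), IsLimitedPacking A'' 2 B →
      B.card ≤ Fintype.card V + limitedPackingNumber A 1 := by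
    intro B hB
    obtain ⟨B', hB', hle, hall⟩ := exchange_lemma A'' hr hpen B hB
    exact le_trans hle (full_bound A A'' hll hlr B' hB' hall)
  constructor
  · apply le_antisymm
    · exact lp_sSup_le A'' 2 _ hub
    · have := lp_le A'' 2 B₀ hlp₀
      rw [hcard₀, hP₀card] at this
      omega
  · apply le_antisymm
    · exact tlp_sSup_le A'' _ fun B hB => hub B (total_to_limited A'' B hB)
    · have := tlp_le A'' B₀ htlp₀
      rw [hcard₀, hP₀card] at this
      omega
end
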